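/- arXiv:2305.15585 — 8 statements merged into one kernel-verified Lean document; each statement's English description precedes it below -/
import Mathlib

section
/- For every positive integer k, there exist a k-regular graph G and a tournament T on the same (finite) vertex set such that for every vertex v the subgraph of G induced on the out-neighbourhood N⁺_T(v) is a forest (contains no cycle). -/
open scoped Classical

/-- A tournament on `V`: an orientation of the complete graph, i.e. an irreflexive
relation such that for distinct vertices exactly one direction is present. -/
def IsTournament {V : Type*} (r : V → V → Prop) : Prop :=
  (∀ v, ¬ r v v) ∧ ∀ u v : V, u ≠ v → (r u v ↔ ¬ r v u)

/-!
Induction on `k`, starting from a single vertex. The induction carries the stronger invariant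
that the *closed* out- and in-neighbourhoods `N⁺[v]`, `N⁻[v]` induce forests. Given such a
pair `(G, r)`, take the prism `G □ K₂`, which is `(k + 1)`-regular, orient both copies of `G`
by `r`, and orient the pairs between the copies so that `(u, false) → (w, true)` iff
`w ∈ N⁻[u]`. Every closed neighbourhood of a vertex `(v, b)` then lies inside `N⁺[v]` on one
layer and `N⁻[v]` on the other. These two sets meet only in `v`, so the induced graph is two
forests joined by at most one rung, which is a bridge.
-/

open SimpleGraph

namespace SimpleGraph

variable {V W α : Type*}

lemma IsRegularOfDegree.of_iso {G : SimpleGraph V} {G' : SimpleGraph W}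
    [G.LocallyFinite] [G'.LocallyFinite] {k : ℕ} (f : G ≃g G') (h : G'.IsRegularOfDegree k) :
    G.IsRegularOfDegree k := fun v => by
  rw [← card_neighborSet_eq_degree, Fintype.card_congr (f.mapNeighborSet v),
    card_neighborSet_eq_degree, h]

lemma IsRegularOfDegree.boxProd {G : SimpleGraph V} {H : SimpleGraph W}
    [G.LocallyFinite] [H.LocallyFinite] [(G □ H).LocallyFinite] {k l : ℕ}
    (hG : G.IsRegularOfDegree k) (hH : H.IsRegularOfDegree l) :
    (G □ H).IsRegularOfDegree (k + l) := fun x => by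
  rw [degree_boxProd, hG, hH]

lemma Walk.apply_eq_of_mem_support {G : SimpleGraph V} {f : V → α} {u v : V} (p : G.Walk u v)
    (hp : ∀ a b, s(a, b) ∈ p.edges → f a = f b) {x : V} (hx : x ∈ p.support) : f x = f u := by
  induction p with
  | nil => rw [support_nil, List.mem_singleton] at hx; rw [hx]
  | cons hadj p ih =>
    rw [support_cons, List.mem_cons] at hx
    obtain rfl | hx := hx
    · rfl
    · rw [ih (fun a b h => hp a b (by simp [h])) hx]
      exact (hp _ _ (by simp)).symm

theorem isAcyclic_of_isAcyclic_induce_fiber {H : SimpleGraph W} (f : W → α)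
    (hfib : ∀ a, (H.induce {w | f w = a}).IsAcyclic)
    (hcross : ∀ ⦃a b c d⦄, H.Adj a b → f a ≠ f b → H.Adj c d → f c ≠ f d → s(a, b) = s(c, d)) :
    H.IsAcyclic := by
  intro u c hc
  by_cases hbi : ∃ a b, s(a, b) ∈ c.edges ∧ f a ≠ f b
  · -- the bichromatic edge lies on a cycle, so it is not a bridge; but without it,
    -- every walk stays in one colour class
    obtain ⟨a, b, hab, hne⟩ := hbi
    obtain ⟨p, hp⟩ := reachable_deleteEdges_iff_exists_walk.mp
      (adj_and_reachable_delete_edges_iff_exists_cycle.mpr ⟨u, c, hc, hab⟩).2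
    refine hne (p.apply_eq_of_mem_support (fun x y hxy => ?_) p.end_mem_support).symm
    by_contra hxy'
    exact hp (hcross (p.adj_of_mem_edges hxy) hxy' (c.adj_of_mem_edges hab) hne ▸ hxy)
  · push Not at hbi
    have hsupp : ∀ x ∈ c.support, x ∈ {w | f w = f u} := fun x hx =>
      c.apply_eq_of_mem_support hbi hx
    refine hfib (f u) _ ((Walk.isCycle_map_iff_of_injective (p := c.induce _ hsupp)
      (f := (Embedding.induce _).toHom) Subtype.val_injective).mp ?_)
    rwa [Walk.map_induce c hsupp]

theorem isAcyclic_induce_boxProd_top {G : SimpleGraph V} {A B : Set V}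
    (hA : (G.induce A).IsAcyclic) (hB : (G.induce B).IsAcyclic) (hAB : (A ∩ B).Subsingleton) :
    ((G □ (⊤ : SimpleGraph Bool)).induce (A ×ˢ {false} ∪ B ×ˢ {true})).IsAcyclic := by
  set S := A ×ˢ {false} ∪ B ×ˢ {true}
  have layer (b : Bool) (X : Set V) (hX : (G.induce X).IsAcyclic)
      (hSX : ∀ z ∈ S, z.2 = b → z.1 ∈ X) :
      (((G □ ⊤).induce S).induce {z : S | z.1.2 = b}).IsAcyclic := by
    refine hX.comap ⟨fun z => ⟨z.1.1.1, hSX _ z.1.2 z.2⟩, fun {z w} h => ?_⟩ fun z w h => ?_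
    · have hzw : z.1.1.2 = w.1.1.2 := z.2.trans w.2.symm
      simpa [boxProd_adj, hzw] using h
    · exact Subtype.ext (Subtype.ext (Prod.ext (congrArg Subtype.val h) (z.2.trans w.2.symm)))
  have rung (z w : S) (h : ((G □ ⊤).induce S).Adj z w) (hne : z.1.2 ≠ w.1.2) :
      z.1.1 = w.1.1 ∧ z.1.1 ∈ A ∩ B := by
    have hzw : z.1.1 = w.1.1 := by simpa [boxProd_adj, hne] using h
    obtain ⟨z, hz⟩ := z
    obtain ⟨w, hw⟩ := w
    simp only at hzw hne ⊢
    refine ⟨hzw, ?_⟩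
    simp only [S, Set.mem_union, Set.mem_prod, Set.mem_singleton_iff] at hz hw
    rw [← hzw] at hw
    grind
  refine isAcyclic_of_isAcyclic_induce_fiber (fun z : S => z.1.2) (fun b => ?_) ?_
  · cases b
    · exact layer false A hA fun z hz hb => by simpa [S, hb] using hz
    · exact layer true B hB fun z hz hb => by simpa [S, hb] using hz
  · intro z w z' w' hzw hne hzw' hne'
    obtain ⟨hv, hvAB⟩ := rung z w hzw hne
    obtain ⟨hv', hvAB'⟩ := rung z' w' hzw' hne'
    have hzz' : z.1.1 = z'.1.1 := hAB hvAB hvAB'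
    have ext (x y : S) (h1 : x.1.1 = y.1.1) (h2 : x.1.2 = y.1.2) : x = y :=
      Subtype.ext (Prod.ext h1 h2)
    rw [Sym2.eq_iff]
    by_cases hb : z.1.2 = z'.1.2
    · exact .inl ⟨ext _ _ hzz' hb, ext _ _ (by grind) (by grind)⟩
    · exact .inr ⟨ext _ _ (by grind) (by grind), ext _ _ (by grind) (by grind)⟩

end SimpleGraph

section

variable {V : Type*}

def doubleRel (r : V → V → Prop) : V × Bool → V × Bool → Prop
  | (u, false), (w, false) => r u w
  | (u, true), (w, true) => r u w
  | (u, false), (w, true) => u = w ∨ r w u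
  | (u, true), (w, false) => u ≠ w ∧ r w u

lemma isTournament_doubleRel {r : V → V → Prop} (hr : IsTournament r) :
    IsTournament (doubleRel r) := by
  refine ⟨fun ⟨v, b⟩ => by cases b <;> exact hr.1 v, ?_⟩
  rintro ⟨u, a⟩ ⟨w, b⟩ hne
  by_cases huw : u = w
  · subst huw
    cases a <;> cases b <;> simp_all [doubleRel]
  · have := hr.2 u w huw
    have := hr.2 w u (Ne.symm huw)
    cases a <;> cases b <;> simp [doubleRel, huw, Ne.symm huw] <;> tauto

lemma IsTournament.comap {W : Type*} {r : V → V → Prop} (hr : IsTournament r) {f : W → V}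
    (hf : Function.Injective f) : IsTournament fun x y => r (f x) (f y) :=
  ⟨fun v => hr.1 (f v), fun _ _ h => hr.2 _ _ (hf.ne h)⟩

lemma IsTournament.closedOut_inter_closedIn_subsingleton {r : V → V → Prop}
    (hr : IsTournament r) (v : V) :
    (insert v {u | r v u} ∩ insert v {u | r u v}).Subsingleton := by
  suffices insert v {u | r v u} ∩ insert v {u | r u v} ⊆ {v} from
    Set.subsingleton_singleton.anti this
  rintro u ⟨hu | hvu, hu' | huv⟩
  · exact hu
  · exact hu
  · exact hu'
  · by_contra h
    exact (hr.2 u v h).mp huv hvu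

def ClosedNbhdsAcyclic (G : SimpleGraph V) (r : V → V → Prop) : Prop :=
  ∀ v, (G.induce (insert v {u | r v u})).IsAcyclic ∧ (G.induce (insert v {u | r u v})).IsAcyclic

/-- Each closed neighbourhood of `(v, b)` in the doubled tournament lies in `N⁺[v]` on one layer
and `N⁻[v]` on the other, and these two sets meet only in `v`. -/
lemma closedNbhdsAcyclic_doubleRel {G : SimpleGraph V} {r : V → V → Prop}
    (hr : IsTournament r) (hG : ClosedNbhdsAcyclic G r) :
    ClosedNbhdsAcyclic (G □ ⊤) (doubleRel r) := by
  rintro ⟨v, b⟩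
  obtain ⟨hout, hin⟩ := hG v
  have hvv := hr.closedOut_inter_closedIn_subsingleton v
  have outIn := isAcyclic_induce_boxProd_top hout hin hvv
  have inOut := isAcyclic_induce_boxProd_top hin hout (Set.inter_comm _ _ ▸ hvv)
  have sub {s t : Set (V × Bool)} (hst : s ⊆ t) (ht : ((G □ ⊤).induce t).IsAcyclic) :
      ((G □ ⊤).induce s).IsAcyclic :=
    ht.embedding ((G □ ⊤).induceHomOfLE hst)
  cases b
  · refine ⟨sub ?_ outIn, sub ?_ inOut⟩ <;>
      rintro ⟨w, _ | _⟩ h <;> simp [doubleRel] at h ⊢ <;> tauto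
  · refine ⟨sub ?_ inOut, sub ?_ outIn⟩ <;>
      rintro ⟨w, _ | _⟩ h <;> simp [doubleRel] at h ⊢ <;> tauto

end

theorem exists_isTournament_isRegularOfDegree_closedNbhdsAcyclic (k : ℕ) :
    ∃ (V : Type) (_ : Fintype V) (G : SimpleGraph V) (r : V → V → Prop),
      IsTournament r ∧ G.IsRegularOfDegree k ∧ ClosedNbhdsAcyclic G r := by
  induction k with
  | zero =>
    refine ⟨Unit, inferInstance, ⊥, fun _ _ => False, ?_, fun _ => by simp,
      fun _ => ⟨isAcyclic_bot.induce _, isAcyclic_bot.induce _⟩⟩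
    exact ⟨fun _ h => h, fun u v h => (h (Subsingleton.elim u v)).elim⟩
  | succ k ih =>
    obtain ⟨V, _, G, r, hr, hG, hacyc⟩ := ih
    refine ⟨V × Bool, inferInstance, G □ ⊤, doubleRel r, isTournament_doubleRel hr, ?_,
      closedNbhdsAcyclic_doubleRel hr hacyc⟩
    have hK₂ : (⊤ : SimpleGraph Bool).IsRegularOfDegree 1 := IsRegularOfDegree.top
    -- `convert` reconciles the classical `LocallyFinite` instance with the box-product one
    convert hG.boxProd hK₂

theorem stmt_3_general (k : ℕ) :
    ∃ (n : ℕ) (G : SimpleGraph (Fin n)) (r : Fin n → Fin n → Prop),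
      IsTournament r ∧
      G.IsRegularOfDegree k ∧
      ∀ v : Fin n, (G.induce {u | r v u}).IsAcyclic := by
  obtain ⟨V, _, G, r, hr, hG, hacyc⟩ := exists_isTournament_isRegularOfDegree_closedNbhdsAcyclic k
  let e := (Fintype.equivFin V).symm
  refine ⟨_, G.comap e, fun x y => r (e x) (e y), hr.comap e.injective,
    hG.of_iso (Iso.comap e G), fun v => ?_⟩
  have hout : (G.induce {u | r (e v) u}).IsAcyclic :=
    (hacyc (e v)).1.embedding (G.induceHomOfLE (Set.subset_insert _ _))
  exact hout.comap (induceHom (Iso.comap e G).toHom fun _ h => h)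
    (induceHom_injective _ _ e.injective.injOn)

/-- For every positive integer k there exist a k-regular graph G and a
tournament T on the same finite vertex set such that for every vertex v the subgraph
of G induced on the out-neighbourhood N⁺_T(v) is a forest. -/
theorem stmt_3 (k : ℕ) (hk : 1 ≤ k) :
    ∃ (n : ℕ) (G : SimpleGraph (Fin n)) (r : Fin n → Fin n → Prop),
      IsTournament r ∧
      G.IsRegularOfDegree k ∧
      ∀ v : Fin n, (G.induce {u | r v u}).IsAcyclic :=
  stmt_3_general k
end

section
/- For every positive integer k there exists a tournament T on the vertex set {0,1}^k of the k-dimensional hypercube graph Q_k such that, for every vertex v, both the subgraph of Q_k induced on the closed out-neighbourhood N⁺_T[v] and the subgraph of Q_k induced on the closed in-neighbourhood N⁻_T[v] are forests. -/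
/-- The k-dimensional hypercube graph on vertex set `{0,1}^k`: two vertices are
adjacent iff they differ in exactly one coordinate. -/
def cubeGraph (k : ℕ) : SimpleGraph (Fin k → Bool) :=
  SimpleGraph.fromRel (fun x y => (Finset.univ.filter fun i => x i ≠ y i).card = 1)


/-!
Orient `u → v` iff `u` precedes `v` lexicographically exactly when the Hamming distance of `u`
and `v` is even. Fix `v` and rank the vertices of a closed neighbourhood `N` of `v` by their
distance to `v`. A neighbour `u` of `w` in `Q_k` with no larger rank arises by flipping a
coordinate `t` in which `w` differs from `v`. Unless `t` is the first such coordinate, `u` and `w`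
compare with `v` in the same lexicographic way while their distances to `v` have different
parities, so exactly one of them lies in `N`. Hence every vertex of `N` has at most one
neighbour in `N` of no larger rank, and a vertex of maximal rank on a cycle would have two.
-/

open Function

theorem Pi.toLex_lt_iff_of_eq_of_ne {ι : Type*} {β : ι → Type*} [LinearOrder ι]
    [∀ i, Preorder (β i)] {x y : ∀ i, β i} {j : ι} (heq : ∀ i < j, x i = y i)
    (hne : x j ≠ y j) : toLex x < toLex y ↔ x j < y j := by
  refine ⟨fun ⟨i, hi, hlt⟩ => ?_, fun h => ⟨j, heq, h⟩⟩
  rcases lt_trichotomy i j with hij | rfl | hji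
  · exact absurd hlt (by simp [heq i hij])
  · exact hlt
  · exact absurd (hi j hji) hne

theorem Function.exists_forall_lt_eq_and_ne {ι : Type*} {β : ι → Type*} [LinearOrder ι]
    [WellFoundedLT ι] {x y : ∀ i, β i} (h : x ≠ y) :
    ∃ j, (∀ i < j, x i = y i) ∧ x j ≠ y j := by
  obtain ⟨j, hj, hmin⟩ := wellFounded_lt.has_min {i | x i ≠ y i} (Function.ne_iff.mp h)
  exact ⟨j, fun i hi => not_not.mp fun hne => hmin i hne hi, hj⟩

section Hamming

variable {ι : Type*} {β : ι → Type*} [Fintype ι] [DecidableEq ι] [∀ i, DecidableEq (β i)]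

theorem hammingDist_update_of_eq {x y : ∀ i, β i} {t : ι} {b : β t} (hb : b ≠ y t)
    (hxy : x t = y t) : hammingDist x (update y t b) = hammingDist x y + 1 := by
  unfold hammingDist
  rw [← Finset.card_insert_of_notMem (a := t) (by simp [hxy])]
  congr 1
  ext i
  by_cases hi : i = t
  · subst hi; simp [hxy, hb.symm]
  · simp [hi]

theorem even_hammingDist_flip_iff {x y : ι → Bool} {t : ι} :
    Even (hammingDist x (update y t (!y t))) ↔ ¬ Even (hammingDist x y) := by
  by_cases hxy : x t = y t
  · rw [hammingDist_update_of_eq (by simp) hxy, Nat.even_add_one]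
  · have hflip := hammingDist_update_of_eq (x := x) (y := update y t (!y t)) (t := t) (b := y t)
      (by simp) (by simpa [Bool.eq_not] using hxy)
    rw [update_idem, update_eq_self] at hflip
    rw [hflip, Nat.even_add_one, not_not]

theorem ne_of_hammingDist_flip_le {x y : ι → Bool} {t : ι}
    (h : hammingDist x (update y t (!y t)) ≤ hammingDist x y) : y t ≠ x t := by
  intro hyx
  rw [hammingDist_update_of_eq (by simp) hyx.symm] at h
  omega

end Hamming

namespace SimpleGraph

theorem isAcyclic_of_lower_neighbor_unique {V α : Type*} [LinearOrder α] {G : SimpleGraph V}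
    (f : V → α) (h : ∀ ⦃w u₁ u₂⦄, G.Adj w u₁ → G.Adj w u₂ → f u₁ ≤ f w → f u₂ ≤ f w → u₁ = u₂) :
    G.IsAcyclic := by
  classical
  intro v c hc
  obtain ⟨w, hw, hmax⟩ := c.support.toFinset.exists_max_image f ⟨v, by simp⟩
  rw [List.mem_toFinset] at hw
  set c' := c.rotate w hw
  have hc' : c'.IsCycle := hc.rotate hw
  have hle : ∀ x ∈ c'.support, f x ≤ f w := fun x hx =>
    hmax x (by simpa [c'] using hx)
  exact hc'.snd_ne_penultimate <|
    h (c'.adj_snd hc'.not_nil) (c'.adj_penultimate hc'.not_nil).symm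
      (hle _ (c'.getVert_mem_support _)) (hle _ (c'.getVert_mem_support _))

end SimpleGraph

section Cube

variable {k : ℕ}

def cubeTournament (u v : Fin k → Bool) : Prop :=
  toLex u < toLex v ↔ Even (hammingDist u v)

theorem isTournament_cubeTournament : IsTournament (cubeTournament (k := k)) := by
  refine ⟨fun v h => lt_irrefl _ (h.mpr (by simp)), fun u v huv => ?_⟩
  have hlt : toLex v < toLex u ↔ ¬ toLex u < toLex v :=
    ⟨lt_asymm, fun h => (lt_or_gt_of_ne (toLex_inj.not.mpr huv)).resolve_left h⟩
  rw [cubeTournament, cubeTournament, hlt, hammingDist_comm]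
  tauto

theorem cubeTournament_flip_iff {v w : Fin k → Bool} {j t : Fin k}
    (hj : ∀ i < j, v i = w i) (hvj : v j ≠ w j) (hwt : w t ≠ v t) (htj : t ≠ j) :
    cubeTournament v (update w t (!w t)) ↔ ¬ cubeTournament v w := by
  have hti : ∀ i ≤ j, update w t (!w t) i = w i := by
    intro i hi
    refine update_of_ne (fun hit => ?_) _ _
    subst hit
    exact hwt (hj i (hi.lt_of_ne htj)).symm
  have hlex : toLex v < toLex (update w t (!w t)) ↔ toLex v < toLex w := by
    rw [Pi.toLex_lt_iff_of_eq_of_ne (fun i hi => (hj i hi).trans (hti i hi.le).symm)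
        (hti j le_rfl ▸ hvj), hti j le_rfl, Pi.toLex_lt_iff_of_eq_of_ne hj hvj]
  rw [cubeTournament, cubeTournament, hlex, even_hammingDist_flip_iff]
  tauto

theorem eq_of_cubeTournament_flip {v w : Fin k → Bool} {P : Prop} {j t : Fin k}
    (hw : w = v ∨ (cubeTournament v w ↔ P))
    (hu : update w t (!w t) = v ∨ (cubeTournament v (update w t (!w t)) ↔ P))
    (hj : ∀ i < j, v i = w i) (hvj : v j ≠ w j) (hwt : w t ≠ v t) : t = j := by
  by_contra htj
  have hwv : w ≠ v := by rintro rfl; exact hvj rfl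
  have huv : update w t (!w t) ≠ v := by
    intro h
    rw [← h, update_of_ne (Ne.symm htj)] at hvj
    exact hvj rfl
  have hflip := cubeTournament_flip_iff hj hvj hwt htj
  have := hw.resolve_left hwv
  have := hu.resolve_left huv
  tauto

theorem exists_eq_update_of_cubeGraph_adj {x y : Fin k → Bool}
    (h : (cubeGraph k).Adj x y) : ∃ t, y = update x t (!x t) := by
  rw [cubeGraph, SimpleGraph.fromRel_adj] at h
  have hxy : hammingDist x y = 1 := h.2.elim id fun h' => (hammingDist_comm x y).trans h'
  obtain ⟨t, ht⟩ := Finset.card_eq_one.mp hxy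
  have hmem : ∀ i, x i ≠ y i ↔ i = t := fun i => by
    simpa using congrArg (i ∈ ·) ht
  refine ⟨t, funext fun i => ?_⟩
  by_cases hi : i = t
  · subst hi
    simpa [eq_comm, Bool.eq_not] using (hmem i).mpr rfl
  · rw [update_of_ne hi]
    exact (not_not.mp (mt (hmem i).mp hi)).symm

theorem eq_of_cubeTournament_lower_neighbors {v w u₁ u₂ : Fin k → Bool} {P : Prop}
    (hw : w = v ∨ (cubeTournament v w ↔ P)) (hu₁ : u₁ = v ∨ (cubeTournament v u₁ ↔ P))
    (hu₂ : u₂ = v ∨ (cubeTournament v u₂ ↔ P))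
    (h₁ : (cubeGraph k).Adj w u₁) (h₂ : (cubeGraph k).Adj w u₂)
    (hle₁ : hammingDist v u₁ ≤ hammingDist v w) (hle₂ : hammingDist v u₂ ≤ hammingDist v w) :
    u₁ = u₂ := by
  obtain ⟨t₁, rfl⟩ := exists_eq_update_of_cubeGraph_adj h₁
  obtain ⟨t₂, rfl⟩ := exists_eq_update_of_cubeGraph_adj h₂
  have hwt₁ := ne_of_hammingDist_flip_le hle₁
  have hwt₂ := ne_of_hammingDist_flip_le hle₂
  have hvw : v ≠ w := by rintro rfl; exact hwt₁ rfl
  obtain ⟨j, hj, hvj⟩ := exists_forall_lt_eq_and_ne hvw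
  rw [eq_of_cubeTournament_flip hw hu₁ hj hvj hwt₁, eq_of_cubeTournament_flip hw hu₂ hj hvj hwt₂]

-- `P = True` describes `N⁺[v]` and `P = False` describes `N⁻[v]`.
theorem isAcyclic_induce_cubeGraph (v : Fin k → Bool) (P : Prop) :
    ((cubeGraph k).induce {x | x = v ∨ (cubeTournament v x ↔ P)}).IsAcyclic :=
  SimpleGraph.isAcyclic_of_lower_neighbor_unique (fun x => hammingDist v x.1)
    fun ⟨_, hw⟩ ⟨_, hu₁⟩ ⟨_, hu₂⟩ h₁ h₂ hle₁ hle₂ =>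
      Subtype.ext (eq_of_cubeTournament_lower_neighbors hw hu₁ hu₂ h₁ h₂ hle₁ hle₂)

end Cube

theorem stmt_4_general (k : ℕ) :
    ∃ r : (Fin k → Bool) → (Fin k → Bool) → Prop,
      IsTournament r ∧
      ∀ v : Fin k → Bool,
        ((cubeGraph k).induce ({v} ∪ {u | r v u})).IsAcyclic ∧
        ((cubeGraph k).induce ({v} ∪ {u | r u v})).IsAcyclic := by
  have hT := isTournament_cubeTournament (k := k)
  refine ⟨cubeTournament, hT, fun v => ⟨?_, ?_⟩⟩
  · have hout :
        {v} ∪ {u | cubeTournament v u} = {x | x = v ∨ (cubeTournament v x ↔ True)} := by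
      ext x
      simp
    rw [hout]
    exact isAcyclic_induce_cubeGraph v True
  · have hin :
        {v} ∪ {u | cubeTournament u v} = {x | x = v ∨ (cubeTournament v x ↔ False)} := by
      ext x
      by_cases hxv : x = v
      · simp [hxv]
      · simp [hxv, hT.2 x v hxv]
    rw [hin]
    exact isAcyclic_induce_cubeGraph v False

/-- For every positive integer k there is a tournament T on the vertex
set `{0,1}^k` of the hypercube Q_k such that for every vertex v both the subgraph of
Q_k induced on the closed out-neighbourhood N⁺_T[v] and the one induced on the closed
in-neighbourhood N⁻_T[v] are forests. -/
theorem stmt_4 (k : ℕ) (hk : 1 ≤ k) :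
    ∃ r : (Fin k → Bool) → (Fin k → Bool) → Prop,
      IsTournament r ∧
      ∀ v : Fin k → Bool,
        ((cubeGraph k).induce ({v} ∪ {u | r v u})).IsAcyclic ∧
        ((cubeGraph k).induce ({v} ∪ {u | r u v})).IsAcyclic :=
  stmt_4_general k
end

section
/- For every positive integer k, every finite graph G with degeneracy at least 12k, and every tournament T on the same vertex set, there exist vertices x and y such that the subgraph of G induced on the out-neighbourhood N⁺_T({x,y}) has degeneracy at least k − 1. -/
open scoped Classical

/-- The degeneracy of a finite graph: the least `d` such that every nonempty
(induced) subgraph has a vertex of degree at most `d`. -/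
noncomputable def degeneracy {V : Type*} [Fintype V] (G : SimpleGraph V) : ℕ :=
  sInf {d : ℕ | ∀ W : Finset V, W.Nonempty →
    ∃ v ∈ W, (W.filter fun u => G.Adj v u).card ≤ d}

/-!
Degeneracy at least `12k` gives a set `W` on which every vertex has more than `12j + 23`
neighbours, where `k = j + 2`. Pick `x ∈ W` of out-degree at least `(|W| - 1)/2` in `W`, and let
`A = N⁺(x) ∩ W` and `B = W ∖ ({x} ∪ A)`, so that `|B| ≤ |A|`. If `A` contains no subgraph of
minimum degree greater than `j`, then `A` is `j`-degenerate, spans at most `j|A|` edges, and hence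
sends at least `(10j + 23)|A|` edges to `B`. A weighted king argument, weighting `b ∈ B` by its
number of neighbours in `A`, yields `y ∈ B` such that `y` and `C = N⁺(y) ∩ B` together receive at
least half of these edges. As `|A ∪ C| ≤ 2|A|`, this is too many for `A ∪ C` to be `j`-degenerate,
so `A ∪ C ⊆ N⁺({x, y})` contains a subgraph of minimum degree greater than `j`.
-/

open Finset

namespace SimpleGraph

variable {V : Type*} (G : SimpleGraph V)

noncomputable def degIn (s : Finset V) (v : V) : ℕ := #{u ∈ s | G.Adj v u}

def MinDegreeGT (d : ℕ) (s : Finset V) : Prop := ∀ v ∈ s, d < G.degIn s v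

lemma degIn_mono {s t : Finset V} (h : s ⊆ t) (v : V) : G.degIn s v ≤ G.degIn t v :=
  card_le_card (filter_subset_filter _ h)

lemma degIn_le_card (s : Finset V) (v : V) : G.degIn s v ≤ #s := card_filter_le _ _

lemma degIn_lt_card {s : Finset V} {v : V} (hv : v ∈ s) : G.degIn s v < #s :=
  card_lt_card (filter_ssubset.2 ⟨v, hv, G.irrefl⟩)

lemma degIn_union_le (s t : Finset V) (v : V) :
    G.degIn (s ∪ t) v ≤ G.degIn s v + G.degIn t v := by
  unfold degIn
  rw [filter_union]
  exact card_union_le _ _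

lemma degIn_insert_le (x : V) (s : Finset V) (v : V) :
    G.degIn (insert x s) v ≤ G.degIn s v + 1 := by
  unfold degIn
  rw [filter_insert]
  split_ifs
  exacts [card_insert_le _ _, Nat.le_succ _]

lemma sum_degIn_comm (s t : Finset V) : ∑ v ∈ s, G.degIn t v = ∑ v ∈ t, G.degIn s v := by
  simp only [degIn, card_filter]
  rw [sum_comm]
  simp only [G.adj_comm]

lemma degIn_union_of_disjoint {s t : Finset V} (h : Disjoint s t) (v : V) :
    G.degIn (s ∪ t) v = G.degIn s v + G.degIn t v := by
  unfold degIn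
  rw [filter_union, card_union_of_disjoint (disjoint_filter_filter h)]

lemma sum_degIn_eq_sum_degIn_erase_add {s : Finset V} {v : V} (hv : v ∈ s) :
    ∑ u ∈ s, G.degIn s u = ∑ u ∈ s.erase v, G.degIn (s.erase v) u + 2 * G.degIn s v := by
  have hs : s = s.erase v ∪ {v} := by rw [union_singleton, insert_erase hv]
  have hdeg (u : V) : G.degIn s u = G.degIn (s.erase v) u + G.degIn {v} u := by
    conv_lhs => rw [hs]
    exact G.degIn_union_of_disjoint (disjoint_singleton_right.2 (notMem_erase v s)) u
  have hloop : G.degIn {v} v = 0 := by simp [degIn]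
  have hback : ∑ u ∈ s.erase v, G.degIn {v} u = G.degIn (s.erase v) v := by
    rw [sum_degIn_comm, sum_singleton]
  rw [← add_sum_erase s _ hv, sum_congr rfl fun u _ => hdeg u, sum_add_distrib, hback, hdeg v,
    hloop]
  ring

lemma sum_degIn_le_of_forall_not_minDegreeGT {j : ℕ} (s : Finset V)
    (h : ∀ P ⊆ s, P.Nonempty → ¬ G.MinDegreeGT j P) :
    ∑ v ∈ s, G.degIn s v ≤ 2 * j * #s := by
  induction s using Finset.strongInduction with
  | _ s ih =>
    rcases s.eq_empty_or_nonempty with rfl | hs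
    · simp
    obtain ⟨v, hv, hvj⟩ : ∃ v ∈ s, G.degIn s v ≤ j := by
      simpa [MinDegreeGT] using h s Subset.rfl hs
    have herase := erase_ssubset hv
    have hrest := ih _ herase fun P hP => h P (hP.trans herase.subset)
    rw [G.sum_degIn_eq_sum_degIn_erase_add hv, ← card_erase_add_one hv]
    nlinarith

lemma lt_degeneracy_iff [Fintype V] {d : ℕ} :
    d < degeneracy G ↔ ∃ W : Finset V, W.Nonempty ∧ G.MinDegreeGT d W := by
  set S := {d : ℕ | ∀ W : Finset V, W.Nonempty → ∃ v ∈ W, G.degIn W v ≤ d}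
  have hS : S.Nonempty :=
    ⟨Fintype.card V, fun W ⟨v, hv⟩ => ⟨v, hv, (G.degIn_le_card W v).trans (card_le_univ W)⟩⟩
  change d < sInf S ↔ _
  constructor
  · intro hd
    by_contra! hW
    refine (Nat.sInf_le (s := S) fun W hne => ?_).not_gt hd
    simpa [MinDegreeGT] using hW W hne
  · rintro ⟨W, hne, hW⟩
    by_contra! hd
    obtain ⟨v, hv, hvd⟩ := Nat.sInf_mem hS W hne
    exact (hW v hv).not_ge (hvd.trans hd)

lemma lt_degeneracy_induce {d : ℕ} (S : Set V) [Fintype S] {P : Finset V} (hPS : ∀ v ∈ P, v ∈ S)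
    (hP : P.Nonempty) (hmin : G.MinDegreeGT d P) : d < degeneracy (G.induce S) := by
  refine (lt_degeneracy_iff _).2 ⟨P.subtype (· ∈ S), ?_, fun v hv => ?_⟩
  · obtain ⟨v, hv⟩ := hP
    exact ⟨⟨v, hPS v hv⟩, mem_subtype.2 hv⟩
  · convert hmin v (mem_subtype.1 hv) using 1
    unfold degIn
    rw [← card_map (Function.Embedding.subtype _)]
    congr 1
    ext u
    simp only [mem_map, mem_filter, mem_subtype, comap_adj, Function.Embedding.subtype_apply]
    constructor
    · rintro ⟨u, ⟨hu, hadj⟩, rfl⟩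
      exact ⟨hu, hadj⟩
    · rintro ⟨hu, hadj⟩
      exact ⟨⟨u, hPS u hu⟩, ⟨hu, hadj⟩, rfl⟩

end SimpleGraph

namespace IsTournament

variable {V : Type*} {r : V → V → Prop}

lemma rel_of_not_rel {u v : V} (hr : IsTournament r) (huv : u ≠ v) (h : ¬ r u v) : r v u :=
  (hr.2 v u huv.symm).2 h

lemma sum_mul_two_mul_sum_out_add {R : Type*} [CommSemiring R] (hr : IsTournament r)
    (B : Finset V) (w : V → R) :
    ∑ y ∈ B, w y * (2 * ∑ u ∈ B with r y u, w u + w y) = (∑ y ∈ B, w y) ^ 2 := by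
  have hpair (y u : V) :
      (if r y u then w y * w u else 0) + (if r u y then w y * w u else 0)
        + (if y = u then w y * w u else 0) = w y * w u := by
    by_cases huy : y = u
    · simp [huy, hr.1 u]
    · by_cases hyu : r y u
      · simp [hyu, (hr.2 y u huy).1 hyu, huy]
      · simp [hyu, hr.rel_of_not_rel huy hyu, huy]
  have hswap : ∑ y ∈ B, ∑ u ∈ B, (if r u y then w y * w u else 0)
      = ∑ y ∈ B, ∑ u ∈ B, (if r y u then w y * w u else 0) := by
    rw [sum_comm]
    simp only [mul_comm]
  calc ∑ y ∈ B, w y * (2 * ∑ u ∈ B with r y u, w u + w y)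
      = 2 * ∑ y ∈ B, ∑ u ∈ B, (if r y u then w y * w u else 0) + ∑ y ∈ B, w y * w y := by
        simp only [mul_add, sum_add_distrib, mul_sum, sum_filter, mul_ite, mul_zero]
        ring_nf
    _ = ∑ y ∈ B, ∑ u ∈ B, ((if r y u then w y * w u else 0) + (if r u y then w y * w u else 0)
          + (if y = u then w y * w u else 0)) := by
        simp only [sum_add_distrib, hswap, sum_ite_eq]
        rw [sum_congr rfl fun y hy => if_pos hy]
        ring
    _ = ∑ y ∈ B, ∑ u ∈ B, w y * w u := by simp only [hpair]
    _ = (∑ y ∈ B, w y) ^ 2 := by rw [sq, sum_mul_sum]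

lemma exists_sum_le_two_mul_sum_out_add (hr : IsTournament r) (B : Finset V) (w : V → ℕ)
    (hw : 0 < ∑ y ∈ B, w y) :
    ∃ y ∈ B, ∑ u ∈ B, w u ≤ 2 * ∑ u ∈ B with r y u, w u + w y := by
  by_contra! h
  set W := ∑ y ∈ B, w y
  have hsq : W * W ≤ W * (W - 1) := calc
    W * W = ∑ y ∈ B, w y * (2 * ∑ u ∈ B with r y u, w u + w y) :=
      (sq W).symm.trans (hr.sum_mul_two_mul_sum_out_add B w).symm
    _ ≤ ∑ y ∈ B, w y * (W - 1) :=
      sum_le_sum fun y hy => Nat.mul_le_mul_left _ (by have := h y hy; omega)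
    _ = W * (W - 1) := (sum_mul _ _ _).symm
  exact (Nat.mul_lt_mul_of_pos_left (Nat.sub_lt hw one_pos) hw).not_ge hsq

lemma exists_card_le_two_mul_card_out_add_one (hr : IsTournament r) {W : Finset V}
    (hW : W.Nonempty) : ∃ x ∈ W, #W ≤ 2 * #{u ∈ W | r x u} + 1 := by
  simpa [← card_eq_sum_ones] using hr.exists_sum_le_two_mul_sum_out_add W 1 (by simpa using hW)

variable (G : SimpleGraph V) {j : ℕ}

lemma exists_minDegreeGT_subset_union_out (hr : IsTournament r) {A B : Finset V}
    (hBA : #B ≤ #A) (hAB : (8 * j + 1) * #A < ∑ b ∈ B, G.degIn A b) :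
    ∃ y ∈ B, ∃ P ⊆ A ∪ {u ∈ B | r y u}, P.Nonempty ∧ G.MinDegreeGT j P := by
  obtain ⟨y, hyB, hy⟩ := hr.exists_sum_le_two_mul_sum_out_add B (G.degIn A) (by omega)
  refine ⟨y, hyB, ?_⟩
  by_contra! hsparse
  set C := {u ∈ B | r y u}
  have hC : #C ≤ #A := (card_filter_le B _).trans hBA
  have hAC : ∑ c ∈ C, G.degIn A c ≤ 4 * j * #A := calc
    ∑ c ∈ C, G.degIn A c ≤ ∑ c ∈ C, G.degIn (A ∪ C) c :=
      sum_le_sum fun c _ => G.degIn_mono subset_union_left c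
    _ ≤ ∑ v ∈ A ∪ C, G.degIn (A ∪ C) v := sum_le_sum_of_subset subset_union_right
    _ ≤ 2 * j * #(A ∪ C) := G.sum_degIn_le_of_forall_not_minDegreeGT _ hsparse
    _ ≤ 2 * j * (#A + #A) := by gcongr; exact (card_union_le A C).trans (by omega)
    _ = 4 * j * #A := by ring
  have hyA := G.degIn_le_card A y
  nlinarith

lemma exists_minDegreeGT_subset_out_union (hr : IsTournament r) {W : Finset V}
    (hW : W.Nonempty) (hmin : G.MinDegreeGT (12 * j + 23) W) :
    ∃ x y : V, ∃ P : Finset V, P.Nonempty ∧ (∀ v ∈ P, r x v ∨ r y v) ∧ G.MinDegreeGT j P := by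
  obtain ⟨x, hxW, hx⟩ := hr.exists_card_le_two_mul_card_out_add_one hW
  set A := {u ∈ W | r x u}
  by_cases hA : ∃ P ⊆ A, P.Nonempty ∧ G.MinDegreeGT j P
  · obtain ⟨P, hPA, hP, hPmin⟩ := hA
    exact ⟨x, x, P, hP, fun v hv => Or.inl (mem_filter.1 (hPA hv)).2, hPmin⟩
  push Not at hA
  have hAW : A ⊆ W.erase x := fun u hu =>
    mem_erase.2 ⟨fun h => hr.1 x (h ▸ (mem_filter.1 hu).2), (mem_filter.1 hu).1⟩
  set B := W.erase x \ A
  have hBA : #B ≤ #A := by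
    rw [card_sdiff_of_subset hAW, card_erase_of_mem hxW]
    omega
  have hA_pos : 0 < #A := by
    have := (hmin x hxW).trans (G.degIn_lt_card hxW)
    omega
  have hWAB : W ⊆ insert x (A ∪ B) := fun u hu => by
    by_cases hux : u = x
    · exact mem_insert.2 (Or.inl hux)
    · exact mem_insert_of_mem (mem_union.2 (or_iff_not_imp_left.2 fun huA =>
        mem_sdiff.2 ⟨mem_erase.2 ⟨hux, hu⟩, huA⟩))
  have hdeg (a : V) (ha : a ∈ A) : 12 * j + 24 ≤ G.degIn A a + G.degIn B a + 1 := by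
    have hWa := (hmin a (mem_filter.1 ha).1).trans_le (G.degIn_mono hWAB a)
    have := G.degIn_insert_le x (A ∪ B) a
    have := G.degIn_union_le A B a
    omega
  have hsum : (12 * j + 24) * #A ≤ ∑ a ∈ A, G.degIn A a + ∑ b ∈ B, G.degIn A b + #A := calc
    (12 * j + 24) * #A = ∑ _a ∈ A, (12 * j + 24) := by rw [sum_const, smul_eq_mul, mul_comm]
    _ ≤ ∑ a ∈ A, (G.degIn A a + G.degIn B a + 1) := sum_le_sum hdeg
    _ = ∑ a ∈ A, G.degIn A a + ∑ b ∈ B, G.degIn A b + #A := by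
      rw [sum_add_distrib, sum_add_distrib, G.sum_degIn_comm A B, card_eq_sum_ones]
  have hAB : (8 * j + 1) * #A < ∑ b ∈ B, G.degIn A b := by
    have := G.sum_degIn_le_of_forall_not_minDegreeGT A hA
    nlinarith
  obtain ⟨y, -, P, hPAC, hP, hPmin⟩ := hr.exists_minDegreeGT_subset_union_out G hBA hAB
  refine ⟨x, y, P, hP, fun v hv => ?_, hPmin⟩
  rcases mem_union.1 (hPAC hv) with h | h
  exacts [Or.inl (mem_filter.1 h).2, Or.inr (mem_filter.1 h).2]

end IsTournament

/-- For every positive integer k, every finite graph G with degeneracy at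
least 12k and every tournament T on the same vertex set, there are vertices x, y such
that G induced on N⁺_T({x,y}) has degeneracy at least k − 1. -/
theorem stmt_5 {V : Type*} [Fintype V] (k : ℕ) (hk : 1 ≤ k)
    (G : SimpleGraph V) (r : V → V → Prop) (hr : IsTournament r)
    (hdeg : 12 * k ≤ degeneracy G) :
    ∃ x y : V, k - 1 ≤ degeneracy (G.induce {u | r x u ∨ r y u}) := by
  rcases Nat.lt_or_ge k 2 with hk2 | hk2
  · obtain ⟨-, ⟨v, -⟩, -⟩ := G.lt_degeneracy_iff.1 (by omega : 0 < degeneracy G)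
    exact ⟨v, v, by omega⟩
  obtain ⟨j, rfl⟩ : ∃ j, k = j + 2 := ⟨k - 2, by omega⟩
  obtain ⟨W, hW, hmin⟩ := G.lt_degeneracy_iff.1 (by omega : 12 * j + 23 < degeneracy G)
  obtain ⟨x, y, P, hP, hPS, hPmin⟩ := hr.exists_minDegreeGT_subset_out_union G hW hmin
  exact ⟨x, y, G.lt_degeneracy_induce _ hPS hP hPmin⟩
end

section
/- For every positive integer t there is some n₀ such that for all integers n ≥ n₀ there exists a function f from the t-element subsets of [n] = {1,…,n} to subsets of [n] with the following two properties: (i) for every pair of t-element subsets A, B of [n], at least one of A ∩ f(B) and B ∩ f(A) is empty; and (ii) for every collection (A_i)_{i ∈ I} of at most (log n)/(2t) t-element subsets of [n], the intersection ⋂_{i∈I} f(A_i) is nonempty. -/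
/-!
Orient the pairs of `[n]` at random: draw a uniformly random `D : [n] × [n] → Bool` and say that
`x` beats `a` when `D (x, a)` is true and `D (a, x)` is false, an asymmetric relation. Put
`f A := {x | x beats every a ∈ A}`. Asymmetry gives (i): elements `a ∈ A ∩ f B` and `b ∈ B ∩ f A`
would beat each other. For (ii), the at most `log n / 2` elements of `⋃ A_i` lie in some set `U`
of exactly `s = ⌊log n / 2⌋` elements, and a fixed `x ∉ U` beats all of `U` with probability
`4^{-s}`, independently over `x`. By the union bound some `D` serves every `U` as soon as
`C(n, s) (1 - 4^{-s})^{n - s} < 1`, which holds for large `n` since `4^s ≤ n^{log 2}` and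
`log² n = o(n^{1 - log 2})`.
-/

open Finset Filter

theorem card_filter_comp_mem_mul_pow {α β γ : Type*} [Fintype α] [Fintype β] [DecidableEq β]
    [Fintype γ] [DecidableEq γ] (ι : α ↪ β) (P : Finset (α → γ)) :
    #{h : β → γ | h ∘ ι ∈ P} * Fintype.card γ ^ Fintype.card α
      = #P * Fintype.card γ ^ Fintype.card β := by
  classical
  let e : (β → γ) ≃ (α → γ) × ({b // b ∉ Set.range ι} → γ) :=
    ((Equiv.sumCompl (· ∈ Set.range ι)).arrowCongr (Equiv.refl γ)).symm.trans <|
      (Equiv.sumArrowEquivProdArrow _ _ _).trans <|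
        Equiv.prodCongr ((Equiv.ofInjective ι ι.injective).arrowCongr (Equiv.refl γ)).symm
          (Equiv.refl _)
  have hcard :
      #{h : β → γ | h ∘ ι ∈ P} = #(P ×ˢ (univ : Finset ({b // b ∉ Set.range ι} → γ))) :=
    card_equiv e fun h => by simp [show (e h).1 = h ∘ ι from rfl]
  have hpow := Fintype.card_congr e
  simp only [Fintype.card_fun, Fintype.card_prod] at hpow
  rw [hcard, card_product, card_univ, Fintype.card_fun, hpow]
  ring

variable {α : Type*}

def Beats (D : α × α → Bool) (x a : α) : Prop := D (x, a) = true ∧ D (a, x) = false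

instance (D : α × α → Bool) : DecidableRel (Beats D) :=
  fun _ _ => inferInstanceAs (Decidable (_ ∧ _))

theorem Beats.asymm {D : α × α → Bool} {x a : α} (h : Beats D x a) : ¬ Beats D a x :=
  fun h' => by simpa [h.1] using h'.2

section Dominators

variable [Fintype α] (r : α → α → Prop) [DecidableRel r]

def commonDominators (A : Finset α) : Finset α := {x | ∀ a ∈ A, r x a}

variable {r}

@[simp]
theorem mem_commonDominators {A : Finset α} {x : α} :
    x ∈ commonDominators r A ↔ ∀ a ∈ A, r x a := by
  simp [commonDominators]

theorem inter_commonDominators_eq_empty_or [DecidableEq α] (hr : ∀ x a, r x a → ¬ r a x)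
    (A B : Finset α) : A ∩ commonDominators r B = ∅ ∨ B ∩ commonDominators r A = ∅ := by
  by_contra! h
  obtain ⟨⟨a, ha⟩, ⟨b, hb⟩⟩ := h
  simp only [mem_inter, mem_commonDominators] at ha hb
  exact hr a b (ha.2 b hb.1) (hb.2 a ha.1)

end Dominators

variable [Fintype α] [DecidableEq α]

/-- The coordinates of `D` that decide whether some `x ∉ U` beats all of `U`; they are disjoint
for distinct `x`, which is where the independence over `x` comes from. -/
def crossPairs (U : Finset α) : (↥Uᶜ × (↥U × Bool)) ↪ α × α where
  toFun q := if q.2.2 then (q.1, q.2.1) else (q.2.1, q.1)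
  inj' := by
    rintro ⟨⟨x, hx⟩, ⟨a, ha⟩, _ | _⟩ ⟨⟨x', hx'⟩, ⟨a', ha'⟩, _ | _⟩ h <;>
      simp only [mem_compl] at hx hx' <;> simp_all

theorem card_filter_commonDominators_eq_empty_mul_le (U : Finset α) :
    #{D : α × α → Bool | commonDominators (Beats D) U = ∅} * 4 ^ (#U * #Uᶜ)
      ≤ (4 ^ #U - 1) ^ #Uᶜ * 2 ^ (Fintype.card α * Fintype.card α) := by
  set P : Finset (↥Uᶜ × (↥U × Bool) → Bool) := {g | ∀ x, Function.curry g x ≠ Prod.snd}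
  have hP : #P = (4 ^ #U - 1) ^ #Uᶜ := by
    have hcurry :
        #P = #(Fintype.piFinset fun _ : ↥Uᶜ => univ.erase (Prod.snd : ↥U × Bool → Bool)) :=
      card_equiv (Equiv.curry _ _ _) fun g => by simp [P]
    simp [hcurry, card_univ, pow_mul']
  have hsub : ({D | commonDominators (Beats D) U = ∅} : Finset (α × α → Bool))
      ⊆ ({D | D ∘ crossPairs U ∈ P} : Finset _) := by
    intro D hD
    simp only [mem_filter_univ, eq_empty_iff_forall_notMem, mem_commonDominators, not_forall,
      P] at hD ⊢
    intro x hx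
    obtain ⟨a, ha, hxa⟩ := hD x
    exact hxa ⟨congrFun hx (⟨a, ha⟩, true), congrFun hx (⟨a, ha⟩, false)⟩
  have hpow : 4 ^ (#U * #Uᶜ) = 2 ^ Fintype.card (↥Uᶜ × (↥U × Bool)) := by
    rw [Fintype.card_prod, Fintype.card_prod, Fintype.card_coe, Fintype.card_coe,
      Fintype.card_bool, show (4 : ℕ) = 2 ^ 2 from rfl, ← pow_mul]
    ring_nf
  rw [hpow]
  calc _ ≤ #({D | D ∘ crossPairs U ∈ P} : Finset _) * 2 ^ Fintype.card (↥Uᶜ × (↥U × Bool)) := by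
        gcongr
    _ = #P * 2 ^ Fintype.card (α × α) := card_filter_comp_mem_mul_pow _ _
    _ = _ := by rw [hP, Fintype.card_prod]

theorem exists_forall_card_eq_commonDominators_nonempty {s : ℕ}
    (h : (Fintype.card α).choose s * (4 ^ s - 1) ^ (Fintype.card α - s)
      < 4 ^ (s * (Fintype.card α - s))) :
    ∃ D : α × α → Bool, ∀ U : Finset α, #U = s → (commonDominators (Beats D) U).Nonempty := by
  by_contra! hbad
  set n := Fintype.card α
  have hcover : (univ : Finset (α × α → Bool))
      ⊆ (powersetCard s univ).biUnion fun U => {D | commonDominators (Beats D) U = ∅} := by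
    intro D _
    obtain ⟨U, hU, hD⟩ := hbad D
    simpa [mem_powersetCard_univ] using ⟨U, hU, hD⟩
  refine lt_irrefl (2 ^ (n * n) * 4 ^ (s * (n - s))) ?_
  calc 2 ^ (n * n) * 4 ^ (s * (n - s))
      = #(univ : Finset (α × α → Bool)) * 4 ^ (s * (n - s)) := by
        simp [card_univ, n]
    _ ≤ ∑ U ∈ powersetCard s univ, #{D : α × α → Bool | commonDominators (Beats D) U = ∅}
          * 4 ^ (s * (n - s)) := by
        rw [← sum_mul]
        gcongr
        exact (card_le_card hcover).trans card_biUnion_le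
    _ ≤ ∑ U ∈ powersetCard s univ, (4 ^ s - 1) ^ (n - s) * 2 ^ (n * n) := by
        refine sum_le_sum fun U hU => ?_
        rw [mem_powersetCard_univ] at hU
        simpa [hU, card_compl] using card_filter_commonDominators_eq_empty_mul_le U
    _ < 2 ^ (n * n) * 4 ^ (s * (n - s)) := by
        rw [sum_const, card_powersetCard, card_univ, smul_eq_mul, ← mul_assoc, mul_comm]
        gcongr

theorem choose_mul_four_pow_sub_one_pow_lt {n s : ℕ}
    (h : s * Real.log n * 4 ^ s < (n - s : ℕ)) :
    n.choose s * (4 ^ s - 1) ^ (n - s) < 4 ^ (s * (n - s)) := by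
  set m := n - s
  have hn : 0 < n := Nat.pos_of_ne_zero (by rintro rfl; simp [m] at h)
  have h4 : (0 : ℝ) < 4 ^ s := by positivity
  set q : ℝ := (4 ^ s)⁻¹
  have hq : 0 ≤ 1 - q := sub_nonneg.mpr (inv_le_one_of_one_le₀ (one_le_pow₀ (by norm_num)))
  have hchoose : (n.choose s : ℝ) ≤ Real.exp (s * Real.log n) := by
    rw [← Real.log_pow, Real.exp_log (by positivity)]
    exact_mod_cast Nat.choose_le_pow n s
  have hfactor : ((4 ^ s - 1 : ℕ) : ℝ) = 4 ^ s * (1 - q) := by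
    rw [Nat.cast_sub (Nat.one_le_pow _ _ (by norm_num)), mul_sub, mul_one,
      mul_inv_cancel₀ h4.ne']
    push_cast
    rfl
  have hpow : (1 - q) ^ m ≤ Real.exp (-(m * q)) := by
    rw [neg_mul_eq_mul_neg, Real.exp_nat_mul]
    gcongr
    exact Real.one_sub_le_exp_neg q
  have hexp : s * Real.log n < m * q := by
    rwa [← div_eq_mul_inv, lt_div_iff₀ h4]
  rw [← Nat.cast_lt (α := ℝ)]
  push_cast
  calc (n.choose s : ℝ) * ((4 ^ s - 1 : ℕ) : ℝ) ^ m
      ≤ Real.exp (s * Real.log n) * ((4 ^ s) ^ m * Real.exp (-(m * q))) := by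
        rw [hfactor, mul_pow]
        have : 0 ≤ (1 - q) ^ m := pow_nonneg hq m
        gcongr
    _ = Real.exp (s * Real.log n - m * q) * 4 ^ (s * m) := by
        rw [sub_eq_add_neg, Real.exp_add, pow_mul]; ring
    _ < 4 ^ (s * m) :=
        mul_lt_of_lt_one_left (by positivity) (Real.exp_lt_one_iff.mpr (by linarith))

theorem four_pow_floor_log_div_two_le {x : ℝ} (hx : 1 ≤ x) :
    (4 : ℝ) ^ ⌊Real.log x / 2⌋₊ ≤ x ^ Real.log 2 := by
  have hlog : 0 ≤ Real.log x := Real.log_nonneg hx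
  calc (4 : ℝ) ^ ⌊Real.log x / 2⌋₊ = (2 : ℝ) ^ ((2 * ⌊Real.log x / 2⌋₊ : ℕ) : ℝ) := by
        rw [Real.rpow_natCast, pow_mul]; norm_num
    _ ≤ (2 : ℝ) ^ Real.log x := by
        gcongr
        · norm_num
        · push_cast
          linarith [Nat.floor_le (div_nonneg hlog zero_le_two)]
    _ = x ^ Real.log 2 := by
        rw [Real.rpow_def_of_pos two_pos, Real.rpow_def_of_pos (by linarith), mul_comm]

theorem eventually_floor_log_mul_four_pow_lt :
    ∀ᶠ n : ℕ in atTop, (⌊Real.log n / 2⌋₊ : ℝ) * Real.log n * 4 ^ ⌊Real.log n / 2⌋₊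
      < (n - ⌊Real.log n / 2⌋₊ : ℕ) := by
  have hreal : ∀ᶠ x : ℝ in atTop, Real.log x ^ 2 ≤ x ^ (3 / 10 : ℝ) ∧ 1 ≤ x := by
    filter_upwards [(isLittleO_log_rpow_rpow_atTop 2 (by norm_num : (0 : ℝ) < 3 / 10)).bound
      one_pos, eventually_ge_atTop 1] with x hx hx1
    refine ⟨?_, hx1⟩
    rwa [Real.rpow_two, one_mul, Real.norm_of_nonneg (by positivity),
      Real.norm_of_nonneg (by positivity)] at hx
  filter_upwards [tendsto_natCast_atTop_atTop.eventually hreal] with n ⟨hL, hn⟩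
  set L := Real.log n
  set s := ⌊L / 2⌋₊
  have hL0 : 0 ≤ L := Real.log_nonneg hn
  have hs : (s : ℝ) ≤ L / 2 := Nat.floor_le (by positivity)
  have hLn : L < n := (Real.log_le_sub_one_of_pos (by positivity)).trans_lt (by linarith)
  have h4 : (4 : ℝ) ^ s ≤ (n : ℝ) ^ (7 / 10 : ℝ) :=
    (four_pow_floor_log_div_two_le hn).trans
      (Real.rpow_le_rpow_of_exponent_le hn (by linarith [Real.log_two_lt_d9]))
  have hsplit : (n : ℝ) ^ (3 / 10 : ℝ) * (n : ℝ) ^ (7 / 10 : ℝ) = n := by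
    rw [← Real.rpow_add (by positivity)]; norm_num
  rw [Nat.cast_sub (by exact_mod_cast (hs.trans (by linarith)).trans hLn.le)]
  calc (s : ℝ) * L * 4 ^ s ≤ L / 2 * L * (n : ℝ) ^ (7 / 10 : ℝ) := by gcongr
    _ ≤ (n : ℝ) ^ (3 / 10 : ℝ) * (n : ℝ) ^ (7 / 10 : ℝ) / 2 := by
        have : 0 ≤ (n : ℝ) ^ (7 / 10 : ℝ) := by positivity
        nlinarith
    _ < n - s := by linarith

/-- For every positive integer t there is some n₀ such that for every
n ≥ n₀ there is a function f from t-element subsets of [n] to subsets of [n] such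
that: (i) for all t-element sets A, B, at least one of A ∩ f(B) and B ∩ f(A) is
empty, and (ii) any collection of at most (log n)/(2t) t-element sets A_i satisfies
⋂ f(A_i) ≠ ∅. (Here [n] is modelled as `Fin n`.) -/
theorem stmt_6 (t : ℕ) (ht : 1 ≤ t) :
    ∃ n₀ : ℕ, ∀ n : ℕ, n₀ ≤ n →
      ∃ f : Finset (Fin n) → Finset (Fin n),
        (∀ A B : Finset (Fin n), A.card = t → B.card = t →
          A ∩ f B = ∅ ∨ B ∩ f A = ∅) ∧
        (∀ 𝒜 : Finset (Finset (Fin n)), (∀ A ∈ 𝒜, A.card = t) →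
          (𝒜.card : ℝ) ≤ Real.log n / (2 * (t : ℝ)) →
          ∃ x : Fin n, ∀ A ∈ 𝒜, x ∈ f A) := by
  obtain ⟨n₀, hn₀⟩ := eventually_atTop.mp eventually_floor_log_mul_four_pow_lt
  refine ⟨n₀, fun n hn => ?_⟩
  set s := ⌊Real.log n / 2⌋₊
  have hsn : s ≤ n := Nat.floor_le_of_le <|
    (half_le_self (Real.log_natCast_nonneg n)).trans (Real.log_le_self n.cast_nonneg)
  obtain ⟨D, hD⟩ := exists_forall_card_eq_commonDominators_nonempty (α := Fin n) (s := s)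
    (by simpa using choose_mul_four_pow_sub_one_pow_lt (hn₀ n hn))
  refine ⟨commonDominators (Beats D),
    fun A B _ _ => inter_commonDominators_eq_empty_or (fun _ _ => Beats.asymm) A B,
    fun 𝒜 h𝒜 hcard => ?_⟩
  have hU : #(𝒜.biUnion id) ≤ s := by
    refine Nat.le_floor ?_
    have ht' : (0 : ℝ) < t := by exact_mod_cast ht
    calc (#(𝒜.biUnion id) : ℝ) ≤ (#𝒜 * t : ℕ) :=
          by exact_mod_cast card_biUnion_le_card_mul _ _ _ fun A hA => (h𝒜 A hA).le
      _ ≤ Real.log n / (2 * t) * t := by push_cast; gcongr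
      _ = Real.log n / 2 := by field_simp
  obtain ⟨W, hUW, hW⟩ := exists_superset_card_eq hU (by simpa using hsn)
  obtain ⟨x, hx⟩ := hD W hW
  exact ⟨x, fun A hA => mem_commonDominators.mpr fun a ha =>
    mem_commonDominators.mp hx a (hUW (mem_biUnion.mpr ⟨A, hA, ha⟩))⟩
end

section
/- Let c ≥ 1 be a real number, let G be a finite graph and T a tournament on the same vertex set. Suppose that for every vertex v the fractional chromatic number of G[N⁺_T(v)] is at most c, i.e., there is a finitely supported probability distribution on the independent sets of G[N⁺_T(v)] such that every vertex of N⁺_T(v) belongs to the random independent set with probability at least 1/c. Then the fractional chromatic number of G is at most 2(c+1), i.e., there is a finitely supported probability distribution on the independent sets of G such that every vertex of G belongs to the random independent set with probability at least 1/(2(c+1)). -/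
/-
By von Neumann's minimax theorem a skew-symmetric matrix game has value zero. For the game of
a tournament, whose payoff matrix is `M - Mᵀ` with `M` the 0/1 matrix of the arcs, an optimal
strategy is a distribution `q` on the vertices under which the in-neighbours of every vertex `u`
weigh at least as much as its out-neighbours; hence `u` together with its in-neighbours has mass
at least `1/2`. Draw `v` according to `q`; with probability `1/(c+1)` take `{v}`, otherwise take
a random independent set of `G[N⁺(v)]`. A vertex `u` is then covered with probability at least
`q(u)/(c+1) + (c/(c+1)) · q(N⁻(u)) / c ≥ 1/(2(c+1))`.
-/

open scoped Classical

open Finset Matrix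

section Distributions

variable {V : Type*} [Fintype V]

def IsDistribOn (P : Finset V → Prop) (p : Finset V → ℝ) : Prop :=
  0 ≤ p ∧ (∀ S, p S ≠ 0 → P S) ∧ ∑ S, p S = 1

theorem isDistribOn_single {P : Finset V → Prop} {S : Finset V} (hS : P S) :
    IsDistribOn P (Pi.single S 1) := by
  refine ⟨Pi.single_nonneg.2 zero_le_one, fun T hT => ?_, by simp⟩
  rw [Pi.single_apply] at hT
  split_ifs at hT with hTS
  exacts [hTS ▸ hS, absurd rfl hT]

theorem convex_isDistribOn (P : Finset V → Prop) : Convex ℝ {p | IsDistribOn P p} := by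
  rintro p ⟨hp0, hpP, hp1⟩ p' ⟨hp0', hpP', hp1'⟩ a b ha hb hab
  refine ⟨add_nonneg (smul_nonneg ha hp0) (smul_nonneg hb hp0'), fun S hS => ?_, ?_⟩
  · by_cases h : p S = 0
    · refine hpP' S fun h' => hS ?_
      simp [h, h']
    · exact hpP S h
  · simp [sum_add_distrib, ← mul_sum, hp1, hp1', hab]

noncomputable def coverage (u : V) : (Finset V → ℝ) →ₗ[ℝ] ℝ :=
  ∑ S ∈ univ.filter (fun S : Finset V => u ∈ S), LinearMap.proj S

theorem coverage_apply (u : V) (p : Finset V → ℝ) :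
    coverage u p = ∑ S ∈ univ.filter (fun S : Finset V => u ∈ S), p S := by
  simp [coverage]

theorem coverage_nonneg {p : Finset V → ℝ} (hp : 0 ≤ p) (u : V) : 0 ≤ coverage u p := by
  rw [coverage_apply]
  exact sum_nonneg fun S _ => hp S

theorem coverage_single (u : V) (S : Finset V) :
    coverage u (Pi.single S 1) = if u ∈ S then 1 else 0 := by
  rw [coverage_apply, sum_pi_single']
  simp

theorem one_div_add_one_le_coverage_smul_single_add_smul {c : ℝ} (hc : 0 < c)
    {p : Finset V → ℝ} (hp : 0 ≤ p) {u v : V} (huv : v = u ∨ 1 / c ≤ coverage u p) :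
    1 / (c + 1) ≤ coverage u ((1 / (c + 1)) • Pi.single {v} 1 + (c / (c + 1)) • p) := by
  have hcov := coverage_nonneg hp u
  have hsingle : 0 ≤ coverage u (Pi.single {v} 1) :=
    coverage_nonneg (Pi.single_nonneg.2 zero_le_one) u
  rw [map_add, map_smul, map_smul, smul_eq_mul, smul_eq_mul]
  rcases huv with rfl | hcu
  · rw [coverage_single, if_pos (mem_singleton_self v)]
    have : 0 ≤ c / (c + 1) * coverage v p := by positivity
    linarith
  · have : c / (c + 1) * (1 / c) = 1 / (c + 1) := by field_simp
    have : 1 / (c + 1) ≤ c / (c + 1) * coverage u p := by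
      rw [← this]; gcongr
    have : 0 ≤ 1 / (c + 1) * coverage u (Pi.single {v} 1) := by positivity
    linarith

end Distributions

section Tournaments

variable {V : Type*} [Fintype V]

theorem Matrix.dotProduct_mulVec_self_of_transpose_eq_neg {A : Matrix V V ℝ} (hA : Aᵀ = -A)
    (x : V → ℝ) : x ⬝ᵥ A *ᵥ x = 0 := by
  have h : x ⬝ᵥ A *ᵥ x = -(x ⬝ᵥ A *ᵥ x) :=
    calc x ⬝ᵥ A *ᵥ x = x ⬝ᵥ x ᵥ* Aᵀ := by rw [vecMul_transpose]
      _ = -(x ⬝ᵥ A *ᵥ x) := by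
        rw [hA, vecMul_neg, dotProduct_neg, dotProduct_mulVec, dotProduct_comm]
  linarith

theorem Matrix.exists_mem_stdSimplex_nonneg_vecMul_of_transpose_eq_neg [Nonempty V]
    {A : Matrix V V ℝ} (hA : Aᵀ = -A) : ∃ q ∈ stdSimplex ℝ V, 0 ≤ q ᵥ* A := by
  let payoff : (V → ℝ) →ₗ[ℝ] (V → ℝ) →ₗ[ℝ] ℝ := (toLinearMap₂' ℝ A).flip
  have hcont : ∀ y, Continuous (payoff y) := fun y => (payoff y).continuous_of_finiteDimensional
  have hcont' : ∀ x, Continuous (payoff.flip x) :=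
    fun x => (payoff.flip x).continuous_of_finiteDimensional
  have hne : (stdSimplex ℝ V).Nonempty :=
    ⟨_, single_mem_stdSimplex ℝ (Classical.arbitrary V)⟩
  obtain ⟨a, ha, b, hb, hsaddle⟩ := Sion.exists_isSaddlePointOn (f := fun x y => payoff x y)
    hne (convex_stdSimplex ℝ V) (isCompact_stdSimplex ℝ V)
    (fun y _ => (hcont' y).continuousOn.lowerSemicontinuousOn)
    (fun y _ => ((payoff.flip y).convexOn (convex_stdSimplex ℝ V)).quasiconvexOn)
    (convex_stdSimplex ℝ V) hne (isCompact_stdSimplex ℝ V)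
    (fun x _ => (hcont x).continuousOn.upperSemicontinuousOn)
    (fun x _ => ((payoff x).concaveOn (convex_stdSimplex ℝ V)).quasiconcaveOn)
  refine ⟨b, hb, fun u => ?_⟩
  -- the payoff vanishes on the diagonal, so the saddle point inequality against `(e_u, a)` suffices
  have h := hsaddle _ (single_mem_stdSimplex ℝ u) a ha
  simp only [payoff, LinearMap.flip_apply, toLinearMap₂'_apply',
    dotProduct_mulVec_self_of_transpose_eq_neg hA, dotProduct_mulVec b, dotProduct_single_one] at h
  exact h

noncomputable def relMatrix (r : V → V → Prop) : Matrix V V ℝ :=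
  Matrix.of fun v u => if r v u then 1 else 0

/-- `(q ᵥ* (1 + relMatrix r)) u` is the `q`-mass of `u` and its in-neighbours. -/
theorem IsTournament.exists_mem_stdSimplex_half_le_vecMul [Nonempty V] {r : V → V → Prop}
    (hr : IsTournament r) :
    ∃ q ∈ stdSimplex ℝ V, ∀ u, 1 / 2 ≤ (q ᵥ* (1 + relMatrix r)) u := by
  set M := relMatrix r
  obtain ⟨q, hq, hqM⟩ := exists_mem_stdSimplex_nonneg_vecMul_of_transpose_eq_neg
    (A := M - Mᵀ) (by rw [transpose_sub, transpose_transpose, neg_sub])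
  refine ⟨q, hq, fun u => ?_⟩
  have hin_out : (M *ᵥ q) u ≤ (q ᵥ* M) u := by
    have := hqM u
    rw [vecMul_sub, vecMul_transpose, Pi.sub_apply, Pi.zero_apply] at this
    linarith
  have htotal : ∀ v, 1 ≤ (1 : Matrix V V ℝ) v u + M v u + M u v := by
    have hM : ∀ a b, 0 ≤ M a b := fun a b => by
      simp only [M, relMatrix, of_apply]; split_ifs <;> norm_num
    intro v
    rcases eq_or_ne v u with rfl | hvu
    · linarith [one_apply_eq (α := ℝ) v, hM v v]
    · rw [one_apply_ne hvu]
      by_cases h : r v u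
      · have : M v u = 1 := by simp [M, relMatrix, h]
        linarith [hM u v]
      · have : M u v = 1 := by simp [M, relMatrix, (hr.2 u v hvu.symm).2 h]
        linarith [hM v u]
  have hcover : 1 ≤ q u + (q ᵥ* M) u + (M *ᵥ q) u := calc
    1 = ∑ v, q v := hq.2.symm
    _ ≤ ∑ v, q v * ((1 : Matrix V V ℝ) v u + M v u + M u v) :=
      sum_le_sum fun v _ => le_mul_of_one_le_right (hq.1 v) (htotal v)
    _ = q u + (q ᵥ* M) u + (M *ᵥ q) u := by
      simp [vecMul, mulVec, dotProduct, mul_add, sum_add_distrib, mul_comm, one_apply]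
  rw [vecMul_add, vecMul_one, Pi.add_apply]
  linarith [hq.1 u]

theorem one_add_relMatrix_div_le_coverage {r : V → V → Prop} (hr : ∀ v, ¬ r v v) {c : ℝ}
    (hc : 0 < c) {p : Finset V → ℝ} (hp : 0 ≤ p) {v : V}
    (hcov : ∀ u, r v u → 1 / c ≤ coverage u p) (u : V) :
    (1 + relMatrix r) v u / (c + 1) ≤
      coverage u ((1 / (c + 1)) • Pi.single {v} 1 + (c / (c + 1)) • p) := by
  rcases eq_or_ne v u with rfl | hvu
  · simpa [relMatrix, hr v] using
      one_div_add_one_le_coverage_smul_single_add_smul hc hp (Or.inl rfl)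
  by_cases hvu' : r v u
  · simpa [relMatrix, one_apply_ne hvu, hvu'] using
      one_div_add_one_le_coverage_smul_single_add_smul hc hp (Or.inr (hcov u hvu'))
  · have hsingle : 0 ≤ (Pi.single {v} 1 : Finset V → ℝ) := Pi.single_nonneg.2 zero_le_one
    have hmix : 0 ≤ (1 / (c + 1)) • Pi.single {v} 1 + (c / (c + 1)) • p :=
      add_nonneg (smul_nonneg (by positivity) hsingle) (smul_nonneg (by positivity) hp)
    simpa [relMatrix, one_apply_ne hvu, hvu'] using coverage_nonneg hmix u

end Tournaments

/-- Let c ≥ 1, G a finite graph, T a tournament on the same vertex set.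
If for every vertex v there is a probability distribution on the independent sets of
G[N⁺_T(v)] covering every vertex of N⁺_T(v) with probability at least 1/c, then there
is a probability distribution on the independent sets of G covering every vertex with
probability at least 1/(2(c+1)); i.e. χ_f(G[N⁺_T(v)]) ≤ c for all v implies
χ_f(G) ≤ 2(c+1). -/
theorem stmt_7 {V : Type*} [Fintype V] (c : ℝ) (hc : 1 ≤ c)
    (G : SimpleGraph V) (r : V → V → Prop) (hr : IsTournament r)
    (h : ∀ v : V, ∃ p : Finset V → ℝ,
      (∀ S, 0 ≤ p S) ∧
      (∀ S, p S ≠ 0 → (∀ x ∈ S, r v x) ∧ ∀ x ∈ S, ∀ y ∈ S, ¬ G.Adj x y) ∧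
      (∑ S : Finset V, p S = 1) ∧
      (∀ u : V, r v u → 1 / c ≤ ∑ S ∈ Finset.univ.filter (fun S : Finset V => u ∈ S), p S)) :
    ∃ p : Finset V → ℝ,
      (∀ S, 0 ≤ p S) ∧
      (∀ S, p S ≠ 0 → ∀ x ∈ S, ∀ y ∈ S, ¬ G.Adj x y) ∧
      (∑ S : Finset V, p S = 1) ∧
      (∀ u : V, 1 / (2 * (c + 1)) ≤
        ∑ S ∈ Finset.univ.filter (fun S : Finset V => u ∈ S), p S) := by
  have hc0 : 0 < c := by linarith
  let indep : Finset V → Prop := fun S => ∀ x ∈ S, ∀ y ∈ S, ¬ G.Adj x y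
  rcases isEmpty_or_nonempty V with hV | hV
  · have hempty : IsDistribOn indep (Pi.single ∅ 1) := isDistribOn_single (by simp [indep])
    exact ⟨_, hempty.1, hempty.2.1, hempty.2.2, isEmptyElim⟩
  choose p hp0 hpsupp hp1 hpcov using h
  set p' := fun v => (1 / (c + 1)) • Pi.single {v} 1 + (c / (c + 1)) • p v
  have hp' : ∀ v, IsDistribOn indep (p' v) := fun v =>
    convex_isDistribOn indep (isDistribOn_single (by simp [indep]))
      ⟨hp0 v, fun S hS => (hpsupp v S hS).2, hp1 v⟩ (by positivity) (by positivity)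
      (by field_simp; ring)
  obtain ⟨q, hq, hqu⟩ := hr.exists_mem_stdSimplex_half_le_vecMul
  have hp := (convex_isDistribOn indep).sum_mem (fun v _ => hq.1 v) hq.2 (fun v _ => hp' v)
  refine ⟨_, hp.1, hp.2.1, hp.2.2, fun u => ?_⟩
  rw [← coverage_apply, map_sum]
  calc 1 / (2 * (c + 1)) ≤ (q ᵥ* (1 + relMatrix r)) u / (c + 1) := by
        rw [← div_div]; gcongr; exact hqu u
    _ = ∑ v, q v * ((1 + relMatrix r) v u / (c + 1)) := by
        simp only [vecMul, dotProduct, sum_div, mul_div_assoc]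
    _ ≤ ∑ v, coverage u (q v • p' v) := sum_le_sum fun v _ => by
        rw [map_smul, smul_eq_mul]
        exact mul_le_mul_of_nonneg_left (one_add_relMatrix_div_le_coverage hr.1 hc0 (hp0 v)
          (fun u huv => (coverage_apply u (p v)).symm ▸ hpcov v u huv) u) (hq.1 v)
end

section
/- Let G be a graph and T a tournament on the same N-element vertex set (N ≥ 2), let χ = χ(G), and let ℓ be an integer with 1 ≤ ℓ ≤ χ − 2. Then there exists a set U of at most ⌈⌈log₂ N⌉ / ⌊(χ − 2)/ℓ⌋⌉ vertices such that χ(G[N⁺_T(U)]) > ℓ. -/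
open Finset SimpleGraph

namespace IsTournament

variable {V : Type*} {r : V → V → Prop} [DecidableRel r]

lemma ite_not_add_ite_not [DecidableEq V] (hr : IsTournament r) (u v : V) :
    ((if r v u then 0 else 1) + if r u v then 0 else 1 : ℕ) = 1 + if u = v then 1 else 0 := by
  by_cases huv : u = v
  · subst huv; simp [hr.1 u]
  · simp only [hr.2 u v huv, huv]
    by_cases h : r v u <;> simp [h]

lemma two_mul_sum_card_filter_not (hr : IsTournament r) (A : Finset V) :
    2 * ∑ v ∈ A, #{u ∈ A | ¬ r v u} = #A * (#A + 1) := by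
  classical
  calc 2 * ∑ v ∈ A, #{u ∈ A | ¬ r v u}
      = ∑ v ∈ A, ∑ u ∈ A, ((if r v u then 0 else 1) + if r u v then 0 else 1) := by
        simp only [card_filter, two_mul, sum_add_distrib, ite_not]
        rw [sum_comm (f := fun v u => if r u v then (0 : ℕ) else 1)]
    _ = ∑ v ∈ A, ∑ u ∈ A, (1 + if u = v then 1 else 0) := by
        simp only [hr.ite_not_add_ite_not]
    _ = #A * (#A + 1) := by
        rw [sum_congr rfl fun v hv => by rw [sum_add_distrib, sum_ite_eq' A v, if_pos hv]]
        simp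

lemma exists_two_mul_card_filter_not_le (hr : IsTournament r) {A : Finset V}
    (hA : A.Nonempty) : ∃ v ∈ A, 2 * #{u ∈ A | ¬ r v u} ≤ #A + 1 := by
  refine exists_le_of_sum_le hA ?_
  rw [← mul_sum, hr.two_mul_sum_card_filter_not, sum_const, smul_eq_mul]

lemma exists_card_le_card_filter_forall_not_le [DecidableEq V] (hr : IsTournament r) (c : ℕ) :
    ∀ (s : ℕ) (A : Finset V), #A ≤ 2 ^ s * c →
      ∃ U : Finset V, #U ≤ s ∧ #{u ∈ A | ∀ v ∈ U, ¬ r v u} ≤ c := by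
  intro s
  induction s with
  | zero => exact fun A hA => ⟨∅, by simp, by simpa using hA⟩
  | succ s ih =>
    intro A hA
    obtain rfl | hne := A.eq_empty_or_nonempty
    · exact ⟨∅, by simp, by simp⟩
    obtain ⟨v, -, hv⟩ := hr.exists_two_mul_card_filter_not_le hne
    obtain ⟨U, hUs, hU⟩ := ih {u ∈ A | ¬ r v u} (by rw [pow_succ, mul_right_comm] at hA; omega)
    refine ⟨insert v U, (card_insert_le _ _).trans (by omega), le_trans ?_ hU⟩
    refine card_le_card fun u hu => ?_
    simp only [mem_filter, mem_insert, forall_eq_or_imp] at hu ⊢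
    exact ⟨⟨hu.1, hu.2.1⟩, hu.2.2⟩

end IsTournament

namespace SimpleGraph

variable {V : Type*} {G : SimpleGraph V} {A B : Set V} {a b : ℕ}

lemma Colorable.induce_of_subset (h : A ⊆ B) (hB : (G.induce B).Colorable a) :
    (G.induce A).Colorable a :=
  hB.of_hom (G.induceHomOfLE h).toHom

lemma colorable_induce_one_of_subsingleton (hA : A.Subsingleton) : (G.induce A).Colorable 1 :=
  colorable_one_iff.mpr <| by
    ext ⟨u, hu⟩ ⟨v, hv⟩
    simpa using fun huv => huv.ne (hA hu hv)

lemma colorable_induce_union (hA : (G.induce A).Colorable a) (hB : (G.induce B).Colorable b) :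
    (G.induce (A ∪ B)).Colorable (a + b) := by
  classical
  obtain ⟨cA, hcA⟩ := (colorable_iff_exists_bdd_nat_coloring a).mp hA
  obtain ⟨cB, hcB⟩ := (colorable_iff_exists_bdd_nat_coloring b).mp hB
  let c : V → ℕ := fun u =>
    if hu : u ∈ A then cA ⟨u, hu⟩ else if hu : u ∈ B then a + cB ⟨u, hu⟩ else 0
  have hc (u : V) (hu : u ∈ A ∪ B) : c u < a + b := by
    unfold c; split_ifs <;> grind
  refine (colorable_iff_exists_bdd_nat_coloring _).mpr
    ⟨Coloring.mk (fun u => c u) ?_, fun u => hc u u.2⟩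
  rintro ⟨u, hu⟩ ⟨v, hv⟩ (huv : G.Adj u v)
  have hA (hu : u ∈ A) (hv : v ∈ A) : cA ⟨u, hu⟩ ≠ cA ⟨v, hv⟩ :=
    cA.valid (show (G.induce A).Adj ⟨u, hu⟩ ⟨v, hv⟩ from huv)
  have hB (hu : u ∈ B) (hv : v ∈ B) : cB ⟨u, hu⟩ ≠ cB ⟨v, hv⟩ :=
    cB.valid (show (G.induce B).Adj ⟨u, hu⟩ ⟨v, hv⟩ from huv)
  unfold c
  split_ifs <;> grind

end SimpleGraph

section Domination

variable {V : Type*} [DecidableEq V] {r : V → V → Prop} [DecidableRel r] (G : SimpleGraph V)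

lemma IsTournament.colorable_induce_of_card_le_two_pow (hr : IsTournament r) {k ℓ : ℕ}
    (hcol : ∀ U : Finset V, #U ≤ k → (G.induce {u | ∃ v ∈ U, r v u}).Colorable ℓ) :
    ∀ (j : ℕ) (A : Finset V), #A ≤ 2 ^ (k * j) → (G.induce (A : Set V)).Colorable (1 + ℓ * j) := by
  intro j
  induction j with
  | zero =>
    intro A hA
    exact colorable_induce_one_of_subsingleton (card_le_one_iff_subsingleton.mp (by simpa using hA))
  | succ j ih =>
    intro A hA
    obtain ⟨U, hUk, hU⟩ := hr.exists_card_le_card_filter_forall_not_le (2 ^ (k * j)) k A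
      (by rwa [← pow_add, add_comm, ← mul_add_one])
    have hunion := colorable_induce_union (ih _ hU) (hcol U hUk)
    refine (hunion.induce_of_subset fun u hu => ?_).mono (by rw [mul_add_one, add_assoc])
    by_cases h : ∃ v ∈ U, r v u
    · exact Or.inr h
    · exact Or.inl (mem_filter.mpr ⟨hu, fun v hv hvu => h ⟨v, hv, hvu⟩⟩)

lemma IsTournament.colorable_of_card_le_two_pow [Fintype V] (hr : IsTournament r) {k ℓ j : ℕ}
    (hcol : ∀ U : Finset V, #U ≤ k → (G.induce {u | ∃ v ∈ U, r v u}).Colorable ℓ)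
    (hV : Fintype.card V ≤ 2 ^ (k * j)) : G.Colorable (1 + ℓ * j) := by
  have h := hr.colorable_induce_of_card_le_two_pow G hcol j univ hV
  rw [coe_univ] at h
  exact (colorable_congr G.induceUnivIso).mp h

end Domination

lemma le_two_pow_natCeil_logb (n : ℕ) : n ≤ 2 ^ ⌈Real.logb 2 n⌉₊ := by
  have h := Real.natCeil_logb_natCast 2 n
  rw [Nat.cast_ofNat] at h
  exact h ▸ Nat.le_pow_clog one_lt_two n

lemma le_natCeil_div_mul (a : ℕ) {b : ℕ} (hb : 0 < b) : a ≤ ⌈(a : ℝ) / b⌉₊ * b := by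
  have := Nat.le_ceil ((a : ℝ) / b)
  rw [div_le_iff₀ (by exact_mod_cast hb)] at this
  exact_mod_cast this

theorem stmt_9_general (N : ℕ) (G : SimpleGraph (Fin N))
    (r : Fin N → Fin N → Prop) (hr : IsTournament r)
    (χ ℓ : ℕ) (hχ : G.chromaticNumber = χ) (hℓ : 1 ≤ ℓ) (hℓχ : ℓ ≤ χ - 2) :
    ∃ U : Finset (Fin N),
      U.card ≤ ⌈((⌈Real.logb 2 N⌉₊ : ℝ)) / (((χ - 2) / ℓ : ℕ) : ℝ)⌉₊ ∧
      (ℓ : ℕ∞) < (G.induce {u | ∃ v ∈ U, r v u}).chromaticNumber := by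
  classical
  set m := (χ - 2) / ℓ
  set K := ⌈((⌈Real.logb 2 N⌉₊ : ℝ)) / (m : ℝ)⌉₊
  by_contra! hcol
  have hm : 0 < m := Nat.div_pos hℓχ hℓ
  have hN : Fintype.card (Fin N) ≤ 2 ^ (K * m) :=
    (Fintype.card_fin N).trans_le <| (le_two_pow_natCeil_logb N).trans
      (Nat.pow_le_pow_right two_pos (le_natCeil_div_mul _ hm))
  have hG : G.Colorable (1 + ℓ * m) := hr.colorable_of_card_le_two_pow G
    (fun U hU => chromaticNumber_le_iff_colorable.mp (hcol U hU)) hN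
  have hχG : χ ≤ 1 + ℓ * m := by exact_mod_cast hχ ▸ hG.chromaticNumber_le
  have hℓm : ℓ * m ≤ χ - 2 := Nat.mul_div_le (χ - 2) ℓ
  omega

/-- Let G be a graph and T a tournament on the same N-element vertex
set (N ≥ 2), let χ = χ(G) and 1 ≤ ℓ ≤ χ − 2. Then there is a set U of at most
⌈⌈log₂ N⌉ / ⌊(χ − 2)/ℓ⌋⌉ vertices with χ(G[N⁺_T(U)]) > ℓ. (Note `(χ - 2) / ℓ`
is natural-number division, i.e. the floor ⌊(χ − 2)/ℓ⌋.) -/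
theorem stmt_9 (N : ℕ) (hN : 2 ≤ N) (G : SimpleGraph (Fin N))
    (r : Fin N → Fin N → Prop) (hr : IsTournament r)
    (χ ℓ : ℕ) (hχ : G.chromaticNumber = χ) (hℓ : 1 ≤ ℓ) (hℓχ : ℓ ≤ χ - 2) :
    ∃ U : Finset (Fin N),
      U.card ≤ ⌈((⌈Real.logb 2 N⌉₊ : ℝ)) / (((χ - 2) / ℓ : ℕ) : ℝ)⌉₊ ∧
      (ℓ : ℕ∞) < (G.induce {u | ∃ v ∈ U, r v u}).chromaticNumber :=
  stmt_9_general N G r hr χ ℓ hχ hℓ hℓχ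
end

section
/- Let G be a finite triangle-free graph whose vertex set is equipped with a linear order ≺, and let T₁ be the tournament on V(G) with an arc from u to v iff either (v ≺ u and uv ∈ E(G)) or (u ≺ v and uv ∉ E(G)). Then every vertex set W inducing a transitive subtournament of T₁ induces a bipartite subgraph of G; consequently χ(T₁) ≥ χ(G)/2. -/
/-- The relation `r` is transitive on the set `W`; for a tournament this says that
the subtournament induced on `W` is transitive (acyclic). -/
def TransOn {V : Type*} (r : V → V → Prop) (W : Set V) : Prop :=
  ∀ u ∈ W, ∀ v ∈ W, ∀ w ∈ W, r u v → r v w → r u w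

/-- The chromatic number of the subtournament of `r` induced on `W`: the least `m`
such that `W` can be partitioned into `m` parts, each inducing a transitive
subtournament. -/
noncomputable def tournChromOn {V : Type*} (r : V → V → Prop) (W : Set V) : ℕ :=
  sInf {m : ℕ | ∃ c : V → Fin m, ∀ i : Fin m, TransOn r {v ∈ W | c v = i}}

lemma key_lemma {V : Type*} [LinearOrder V] {G : SimpleGraph V}
    (hG : G.CliqueFree 3) {r : V → V → Prop}
    (hr : ∀ u v : V, r u v ↔ (v < u ∧ G.Adj u v) ∨ (u < v ∧ ¬ G.Adj u v))
    {W : Set V} (hW : TransOn r W) {u v w : V} (hu : u ∈ W) (hv : v ∈ W) (hw : w ∈ W)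
    (huv : u < v) (hvw : v < w) (auv : G.Adj u v) (avw : G.Adj v w) : False := by
  have h1 : r v u := (hr v u).2 (Or.inl ⟨huv, auv.symm⟩)
  have h2 : r w v := (hr w v).2 (Or.inl ⟨hvw, avw.symm⟩)
  have h3 : r w u := hW w hw v hv u hu h2 h1
  rcases (hr w u).1 h3 with ⟨_, a⟩ | ⟨hlt, _⟩
  · exact hG {u, v, w} (SimpleGraph.is3Clique_triple_iff.2 ⟨auv, a.symm, avw⟩)
  · exact absurd (huv.trans hvw) (not_lt.2 hlt.le)

/-- Let G be a finite triangle-free graph on a linearly ordered vertex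
set and let T₁ be the tournament with an arc u → v iff (v ≺ u and uv ∈ E(G)) or
(u ≺ v and uv ∉ E(G)). Then every vertex set W inducing a transitive subtournament of
T₁ induces a bipartite subgraph of G; consequently χ(T₁) ≥ χ(G)/2, i.e.
χ(G) ≤ 2·χ(T₁). -/
theorem stmt_11 {V : Type*} [Fintype V] [LinearOrder V] (G : SimpleGraph V)
    (hG : G.CliqueFree 3) (r : V → V → Prop)
    (hr : ∀ u v : V, r u v ↔ (v < u ∧ G.Adj u v) ∨ (u < v ∧ ¬ G.Adj u v)) :
    (∀ W : Set V, TransOn r W → (G.induce W).chromaticNumber ≤ 2) ∧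
    G.chromaticNumber ≤ 2 * (tournChromOn r Set.univ : ℕ∞) := by
  classical
  constructor
  · intro W hW
    have hcol : (G.induce W).Colorable 2 := by
      refine ⟨SimpleGraph.Coloring.mk
        (fun a => if ∃ u : W, (u : V) < (a : V) ∧ G.Adj u a then 0 else 1) ?_⟩
      intro a b hab heq
      have hadj : G.Adj a b := hab
      rcases lt_trichotomy (a : V) (b : V) with h | h | h
      · have hb : ∃ u : W, (u : V) < (b : V) ∧ G.Adj u b := ⟨a, h, hadj⟩
        have ha : ¬ ∃ u : W, (u : V) < (a : V) ∧ G.Adj u a := by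
          rintro ⟨u, hu, hadj'⟩
          exact key_lemma hG hr hW u.2 a.2 b.2 hu h hadj' hadj
        simp only [if_neg ha, if_pos hb] at heq
        exact absurd heq (by decide)
      · exact hadj.ne h
      · have ha : ∃ u : W, (u : V) < (a : V) ∧ G.Adj u a := ⟨b, h, hadj.symm⟩
        have hb : ¬ ∃ u : W, (u : V) < (b : V) ∧ G.Adj u b := by
          rintro ⟨u, hu, hadj'⟩
          exact key_lemma hG hr hW u.2 b.2 a.2 hu h hadj' hadj.symm
        simp only [if_pos ha, if_neg hb] at heq
        exact absurd heq (by decide)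
    exact hcol.chromaticNumber_le
  · set S := {m : ℕ | ∃ c : V → Fin m, ∀ i : Fin m, TransOn r {v ∈ Set.univ | c v = i}}
    have hSne : S.Nonempty := by
      refine ⟨Fintype.card V, Fintype.equivFin V, fun i => ?_⟩
      intro u hu v hv w hw huv hvw
      have h1 : u = v := (Fintype.equivFin V).injective (hu.2.trans hv.2.symm)
      have h2 : v = w := (Fintype.equivFin V).injective (hv.2.trans hw.2.symm)
      subst h1; subst h2; exact huv
    have hmem : tournChromOn r Set.univ ∈ S := Nat.sInf_mem hSne
    set m := tournChromOn r Set.univ with hm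
    obtain ⟨c, hc⟩ := hmem
    have hcard : Fintype.card (Fin m × Bool) = 2 * m := by
      simp [Fintype.card_prod, mul_comm]
    have hcol : G.Colorable (2 * m) := by
      rw [← hcard]
      refine SimpleGraph.Coloring.colorable
        (SimpleGraph.Coloring.mk
          (fun v => (c v, if ∃ u, u < v ∧ G.Adj u v ∧ c u = c v then true else false)) ?_)
      intro a b hab heq
      have hcab : c a = c b := congrArg Prod.fst heq
      have hdab : (if ∃ u, u < a ∧ G.Adj u a ∧ c u = c a then true else false)
          = (if ∃ u, u < b ∧ G.Adj u b ∧ c u = c b then true else false) :=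
        congrArg Prod.snd heq
      rcases lt_trichotomy a b with h | h | h
      · have hb : ∃ u, u < b ∧ G.Adj u b ∧ c u = c b := ⟨a, h, hab, hcab⟩
        have ha : ¬ ∃ u, u < a ∧ G.Adj u a ∧ c u = c a := by
          rintro ⟨u, hu, hadj', hcu⟩
          exact key_lemma hG hr (hc (c a)) ⟨trivial, hcu⟩ ⟨trivial, rfl⟩
            ⟨trivial, hcab.symm⟩ hu h hadj' hab
        rw [if_neg ha, if_pos hb] at hdab
        exact Bool.false_ne_true hdab
      · exact hab.ne h
      · have ha : ∃ u, u < a ∧ G.Adj u a ∧ c u = c a := ⟨b, h, hab.symm, hcab.symm⟩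
        have hb : ¬ ∃ u, u < b ∧ G.Adj u b ∧ c u = c b := by
          rintro ⟨u, hu, hadj', hcu⟩
          exact key_lemma hG hr (hc (c b)) ⟨trivial, hcu⟩ ⟨trivial, rfl⟩
            ⟨trivial, hcab⟩ hu h hadj' hab.symm
        rw [if_pos ha, if_neg hb] at hdab
        exact Bool.false_ne_true hdab.symm
    calc G.chromaticNumber ≤ ((2 * m : ℕ) : ℕ∞) := hcol.chromaticNumber_le
      _ = 2 * (m : ℕ∞) := by push_cast; ring
end

section
/- Let t and k be positive integers with k > t, let n = 2k + t, and let f be a function from t-element subsets of [n] to subsets of [n] satisfying: (i) for all t-element sets A, B ⊆ [n], at least one of A ∩ f(B) and B ∩ f(A) is empty; and (ii) for every collection of at most (log n)/(2t) t-element subsets A_i of [n], ⋂ f(A_i) ≠ ∅. Define a directed graph D on the stable k-subsets of [n] with an arc from S₁ to S₂ iff f(gap(S₁)) ∩ gap(S₂) = ∅. Then (a) for any two distinct stable k-subsets S₁, S₂ there is an arc from S₁ to S₂ or from S₂ to S₁ in D; and (b) for every set U of at most (log n)/(2t) stable k-subsets, the subgraph of the Schrijver graph SG(n,k) induced on N⁺_D(U)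 = ⋃_{S∈U} {S' : D has an arc S→S'} is bipartite. -/
/-- The cyclic successor on `Fin n` (`n + 1` is identified with `1`). -/
def cyc {n : ℕ} (r : Fin n) : Fin n := ⟨(r.val + 1) % n, Nat.mod_lt _ r.pos⟩

/-- A set `S ⊆ [n]` is stable if it contains no two cyclically consecutive elements. -/
def IsStable {n : ℕ} (S : Finset (Fin n)) : Prop :=
  ∀ i : Fin n, ¬ (i ∈ S ∧ cyc i ∈ S)

/-- `gap S` is the set of r ∈ [n] with {r, r+1} ∩ S = ∅ (cyclically). -/
def gapSet {n : ℕ} (S : Finset (Fin n)) : Finset (Fin n) :=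
  Finset.univ.filter fun r => r ∉ S ∧ cyc r ∉ S

/-- The vertices of the Schrijver graph SG(n,k): stable k-element subsets of [n]. -/
def SchrijverVert (n k : ℕ) : Type := {S : Finset (Fin n) // S.card = k ∧ IsStable S}

/-- The Schrijver graph SG(n,k): the induced subgraph of the Kneser graph on the
stable k-element subsets of [n]; two such sets are adjacent iff disjoint. -/
def schrijverGraph (n k : ℕ) : SimpleGraph (SchrijverVert n k) :=
  SimpleGraph.fromRel fun A B => Disjoint A.val B.val

lemma cyc_injective {n : ℕ} : Function.Injective (cyc (n := n)) := by
  intro a b h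
  have h' : (a.1 + 1) % n = (b.1 + 1) % n := congrArg Fin.val h
  have ha := a.isLt
  have hb := b.isLt
  have e1 : (a.1 + 1) % n = if a.1 + 1 = n then 0 else a.1 + 1 := by
    split
    · simp_all
    · exact Nat.mod_eq_of_lt (by omega)
  have e2 : (b.1 + 1) % n = if b.1 + 1 = n then 0 else b.1 + 1 := by
    split
    · simp_all
    · exact Nat.mod_eq_of_lt (by omega)
  rw [e1, e2] at h'
  apply Fin.ext
  split at h' <;> split at h' <;> omega

lemma gap_card {n k t : ℕ} (hn : n = 2 * k + t) (S : Finset (Fin n))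
    (hS : S.card = k) (hst : IsStable S) : (gapSet S).card = t := by
  classical
  have hbij : Function.Bijective (cyc (n := n)) :=
    Finite.injective_iff_bijective.mp cyc_injective
  let e : Fin n ≃ Fin n := Equiv.ofBijective _ hbij
  have hecyc : ∀ r, e r = cyc r := fun r => rfl
  set T : Finset (Fin n) := S.image e.symm with hT
  have hmemT : ∀ r : Fin n, r ∈ T ↔ cyc r ∈ S := by
    intro r
    simp only [hT, Finset.mem_image]
    constructor
    · rintro ⟨s, hs, rfl⟩
      rwa [← hecyc, Equiv.apply_symm_apply]
    · intro h
      exact ⟨cyc r, h, by rw [← hecyc, Equiv.symm_apply_apply]⟩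
  have hTcard : T.card = k := by
    rw [hT, Finset.card_image_of_injective _ e.symm.injective, hS]
  have hdisj : Disjoint S T := by
    rw [Finset.disjoint_left]
    intro r hrS hrT
    exact hst r ⟨hrS, (hmemT r).mp hrT⟩
  have hcompl : gapSet S = (S ∪ T)ᶜ := by
    ext r
    simp [gapSet, Finset.mem_compl, hmemT r]
  have : (S ∪ T).card = 2 * k := by
    rw [Finset.card_union_of_disjoint hdisj, hS, hTcard]; ring
  rw [hcompl, Finset.card_compl, this]
  simp [hn]

/-- Let 0 < t < k, n = 2k + t and let f be a function from t-element
subsets of [n] to subsets of [n] such that (i) for all t-element sets A, B, at least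
one of A ∩ f(B), B ∩ f(A) is empty, and (ii) any at most (log n)/(2t) many t-element
sets A_i satisfy ⋂ f(A_i) ≠ ∅. Define a digraph D on the stable k-subsets of [n] with
an arc S₁ → S₂ iff f(gap(S₁)) ∩ gap(S₂) = ∅. Then (a) any two distinct stable
k-subsets are joined by an arc of D in at least one direction, and (b) for every set
U of at most (log n)/(2t) stable k-subsets, the subgraph of SG(n,k) induced on
N⁺_D(U) is bipartite. -/
theorem stmt_12 (t k n : ℕ) (ht : 1 ≤ t) (htk : t < k) (hn : n = 2 * k + t)
    (f : Finset (Fin n) → Finset (Fin n))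
    (hf1 : ∀ A B : Finset (Fin n), A.card = t → B.card = t →
      A ∩ f B = ∅ ∨ B ∩ f A = ∅)
    (hf2 : ∀ 𝒜 : Finset (Finset (Fin n)), (∀ A ∈ 𝒜, A.card = t) →
      (𝒜.card : ℝ) ≤ Real.log n / (2 * (t : ℝ)) →
      ∃ x : Fin n, ∀ A ∈ 𝒜, x ∈ f A) :
    (∀ S₁ S₂ : SchrijverVert n k, S₁ ≠ S₂ →
      f (gapSet S₁.val) ∩ gapSet S₂.val = ∅ ∨ f (gapSet S₂.val) ∩ gapSet S₁.val = ∅) ∧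
    (∀ U : Finset (SchrijverVert n k),
      (U.card : ℝ) ≤ Real.log n / (2 * (t : ℝ)) →
      ((schrijverGraph n k).induce
        {S' : SchrijverVert n k | ∃ S ∈ U, f (gapSet S.val) ∩ gapSet S'.val = ∅}
        ).chromaticNumber ≤ 2) := by
  have hgap : ∀ S : SchrijverVert n k, (gapSet S.val).card = t := fun S =>
    gap_card hn S.val S.2.1 S.2.2
  constructor
  · intro S₁ S₂ _
    rcases hf1 _ _ (hgap S₁) (hgap S₂) with h | h
    · right; rwa [Finset.inter_comm]
    · left; rwa [Finset.inter_comm]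
  · intro U hU
    classical
    set 𝒜 : Finset (Finset (Fin n)) := U.image (fun S => gapSet S.val) with h𝒜
    have hcards : ∀ A ∈ 𝒜, A.card = t := by
      intro A hA
      simp only [h𝒜, Finset.mem_image] at hA
      obtain ⟨S, _, rfl⟩ := hA
      exact hgap S
    have hcardle : (𝒜.card : ℝ) ≤ Real.log n / (2 * (t : ℝ)) := by
      refine le_trans ?_ hU
      exact_mod_cast Finset.card_image_le
    obtain ⟨x, hx⟩ := hf2 𝒜 hcards hcardle
    have key : ∀ S' : SchrijverVert n k,
        (∃ S ∈ U, f (gapSet S.val) ∩ gapSet S'.val = ∅) →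
        x ∈ S'.val ∨ cyc x ∈ S'.val := by
      rintro S' ⟨S, hSU, hfe⟩
      have hxf : x ∈ f (gapSet S.val) := hx _ (Finset.mem_image_of_mem _ hSU)
      have hxg : x ∉ gapSet S'.val := by
        intro hxg
        have : x ∈ f (gapSet S.val) ∩ gapSet S'.val := Finset.mem_inter.mpr ⟨hxf, hxg⟩
        rw [hfe] at this
        exact absurd this (Finset.notMem_empty x)
      by_contra hcon
      push_neg at hcon
      exact hxg (Finset.mem_filter.mpr ⟨Finset.mem_univ x, hcon.1, hcon.2⟩)
    have hcol : ((schrijverGraph n k).induce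
        {S' : SchrijverVert n k | ∃ S ∈ U, f (gapSet S.val) ∩ gapSet S'.val = ∅}).Colorable 2 := by
      have C : ((schrijverGraph n k).induce
          {S' : SchrijverVert n k | ∃ S ∈ U, f (gapSet S.val) ∩ gapSet S'.val = ∅}).Coloring Bool := by
        refine SimpleGraph.Coloring.mk (fun v => decide (x ∈ v.1.val)) ?_
        intro v w hvw heq
        have hadj : (schrijverGraph n k).Adj v.1 w.1 := hvw
        rw [schrijverGraph, SimpleGraph.fromRel_adj] at hadj
        have hdisj : Disjoint v.1.val w.1.val := by
          rcases hadj.2 with h | h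
          · exact h
          · exact h.symm
        have hv := key v.1 v.2
        have hw := key w.1 w.2
        simp only [decide_eq_decide] at heq
        by_cases hxv : x ∈ v.1.val
        · have hxw : x ∈ w.1.val := heq.mp hxv
          exact Finset.disjoint_left.mp hdisj hxv hxw
        · have hxw : x ∉ w.1.val := fun h => hxv (heq.mpr h)
          have h1 : cyc x ∈ v.1.val := hv.resolve_left hxv
          have h2 : cyc x ∈ w.1.val := hw.resolve_left hxw
          exact Finset.disjoint_left.mp hdisj h1 h2
      simpa using C.colorable
    exact hcol.chromaticNumber_le
end
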